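/- arXiv:2410.10478 — 7 statements merged into one kernel-verified Lean document; each statement's English description precedes it below -/
import Mathlib

section
/- An ideal J ⊆ S is radical, Borel-fixed, and concentrated in positive degrees if and only if J = J_A for some antichain A of the poset P = [m]×[n], where J_A is generated by the monomials x_a y_b with (a,b) in the order ideal generated by A. -/
open MvPolynomial

/-- The bigrading on `S = k[x_1,…,x_m,y_1,…,y_n]`: `deg x_i = (1,0)`, `deg y_j = (0,1)`. -/
def wdeg (m n : ℕ) : (Fin m ⊕ Fin n) → ℕ × ℕ :=
  Sum.elim (fun _ => ((1, 0) : ℕ × ℕ)) (fun _ => ((0, 1) : ℕ × ℕ))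

/-- The automorphism of `S` induced by a pair of matrices. -/
noncomputable def borelAut (k : Type*) [CommSemiring k] (m n : ℕ)
    (g : Matrix (Fin m) (Fin m) k) (h : Matrix (Fin n) (Fin n) k) :
    MvPolynomial (Fin m ⊕ Fin n) k →ₐ[k] MvPolynomial (Fin m ⊕ Fin n) k :=
  aeval (Sum.elim
    (fun i => ∑ j, g j i • X (Sum.inl j))
    (fun i => ∑ j, h j i • X (Sum.inr j)))

/-- Borel-fixed: fixed by all automorphisms induced by invertible upper triangular matrices. -/
def BorelFixed {k : Type*} [CommSemiring k] {m n : ℕ}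
    (J : Ideal (MvPolynomial (Fin m ⊕ Fin n) k)) : Prop :=
  ∀ (g : Matrix (Fin m) (Fin m) k) (h : Matrix (Fin n) (Fin n) k),
    IsUnit g → IsUnit h →
    (∀ r c : Fin m, c < r → g r c = 0) →
    (∀ r c : Fin n, c < r → h r c = 0) →
    J.map (borelAut k m n g h) = J

/-!
The ideal `J_O` spanned by the monomials `x_a y_b`, `(a, b) ∈ O`, is a squarefree monomial ideal:
it is the intersection of the ideals spanned by the vertex covers of `O`, hence radical, and every
monomial in it involves an `x` and a `y`. An upper triangular substitution sends `x_a y_b` to a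
combination of the `x_a' y_b'` with `a' ≤ a`, `b' ≤ b`, so it preserves `J_O` when `O` is a lower
set; the inverse matrix is upper triangular too, which gives equality.

Conversely, over an infinite field invariance under the diagonal torus makes `J` a monomial ideal.
If `φ ≤ id` is a retraction of the indices, the renaming `x_c ↦ x_{φ c}` is the Borel move
`x_c ↦ x_c + x_{φ c}` followed by setting the moved variables to zero, and both steps preserve the
monomial ideal `J`. With `φ = min a`, this shows that `D = {(a, b) | x_a y_b ∈ J}` is a lower set,
and that a monomial of `J` whose smallest `x`-index is `a` and smallest `y`-index is `b` is sent to
a divisor of a power of `x_a y_b`; radicality then puts `x_a y_b` in `J`. Hence `J = J_D`, and `A`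
is the set of maximal elements of `D`.
-/

namespace MvPolynomial

variable {σ : Type*}

section CommSemiring

variable {R : Type*} [CommSemiring R]

noncomputable def killVars (T : Set σ) : MvPolynomial σ R →ₐ[R] MvPolynomial σ R :=
  aeval (Tᶜ.indicator X)

@[simp]
theorem killVars_X (T : Set σ) (i : σ) : killVars T (X i : MvPolynomial σ R) = Tᶜ.indicator X i :=
  aeval_X _ _

open Classical in
theorem killVars_monomial (T : Set σ) (e : σ →₀ ℕ) (c : R) :
    killVars T (monomial e c) = if ∀ i ∈ T, e i = 0 then monomial e c else 0 := by
  rw [killVars, aeval_monomial]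
  split_ifs with h
  · rw [← mul_one c, ← C_mul_monomial, ← prod_X_pow_eq_monomial, mul_one, algebraMap_eq,
      Finsupp.prod]
    congr 1
    refine Finset.prod_congr rfl fun i hi => ?_
    rw [Set.indicator_of_mem]
    exact fun hiT => Finsupp.mem_support_iff.mp hi (h i hiT)
  · obtain ⟨i, hiT, hi⟩ := not_forall₂.mp h
    rw [Finsupp.prod, Finset.prod_eq_zero (Finsupp.mem_support_iff.mpr hi), mul_zero]
    rw [Set.indicator_of_notMem (by simpa using hiT), zero_pow hi]

open Classical in
theorem coeff_killVars (T : Set σ) (p : MvPolynomial σ R) (e : σ →₀ ℕ) :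
    coeff e (killVars T p) = if ∀ i ∈ T, e i = 0 then coeff e p else 0 := by
  induction p using MvPolynomial.induction_on' with
  | monomial d c =>
    rw [killVars_monomial]
    by_cases he : d = e
    · subst he; split_ifs <;> simp
    · split_ifs <;> simp [coeff_monomial, he]
  | add p q hp hq => simp only [map_add, coeff_add, hp, hq]; split_ifs <;> simp

theorem killVars_eq_zero_iff (T : Set σ) (p : MvPolynomial σ R) :
    killVars T p = 0 ↔ p ∈ Ideal.span (X '' T) := by
  classical
  rw [mem_ideal_span_X_image, MvPolynomial.ext_iff]
  simp only [coeff_killVars, coeff_zero, mem_support_iff]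
  refine forall_congr' fun e => ?_
  split_ifs <;> grind

def IsMonomialIdeal (J : Ideal (MvPolynomial σ R)) : Prop :=
  ∀ p ∈ J, ∀ e ∈ p.support, monomial e 1 ∈ J

theorem IsMonomialIdeal.killVars_mem {J : Ideal (MvPolynomial σ R)} (hJ : IsMonomialIdeal J)
    (T : Set σ) {p : MvPolynomial σ R} (hp : p ∈ J) : killVars T p ∈ J := by
  classical
  rw [p.as_sum, map_sum]
  refine J.sum_mem fun e he => ?_
  rw [killVars_monomial]
  split_ifs
  · rw [← mul_one (coeff e p), ← C_mul_monomial]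
    exact J.mul_mem_left _ (hJ p hp e he)
  · exact J.zero_mem

theorem aeval_smul_X_monomial (t : σ → R) (d : σ →₀ ℕ) (c : R) :
    aeval (fun i => t i • X i) (monomial d c) = (d.prod fun i n => t i ^ n) • monomial d c := by
  rw [aeval_monomial, monomial_eq, algebraMap_eq, Finsupp.prod, Finsupp.prod, Finsupp.prod]
  simp only [smul_pow, Finset.prod_smul, mul_smul_comm]

end CommSemiring

theorem span_X_image_isRadical {R : Type*} [CommRing R] [IsReduced R] (T : Set σ) :
    (Ideal.span (X '' T : Set (MvPolynomial σ R))).IsRadical := by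
  rintro p ⟨N, hN⟩
  rw [← killVars_eq_zero_iff, map_pow] at hN
  rw [← killVars_eq_zero_iff]
  exact IsReduced.eq_zero _ ⟨N, hN⟩

/- A linear form `ℓ` vanishing on `J` turns `t ↦ ℓ (p (t • X))` into the polynomial function
`Q` on the torus; `Q` vanishes there, so all its coefficients `ℓ (monomial e (coeff e p))` do. -/
theorem isMonomialIdeal_of_forall_aeval_smul_X_mem {k : Type*} [Field k] [Infinite k]
    {J : Ideal (MvPolynomial σ k)}
    (hJ : ∀ t : σ → k, (∀ i, t i ≠ 0) → ∀ p ∈ J, aeval (fun i => t i • X i) p ∈ J) :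
    IsMonomialIdeal J := by
  intro p hp e he
  suffices hmem : monomial e (coeff e p) ∈ J by
    have hc : coeff e p ≠ 0 := mem_support_iff.mp he
    simpa [C_mul_monomial, hc] using J.mul_mem_left (C (coeff e p)⁻¹) hmem
  by_contra hnot
  obtain ⟨ℓ, hℓe, hℓJ⟩ := Submodule.exists_dual_map_eq_bot_of_notMem
    (p := J.restrictScalars k) hnot inferInstance
  replace hℓJ : ∀ q ∈ J, ℓ q = 0 := fun q hq => LinearMap.le_ker_iff_map.mpr hℓJ hq
  let Q : MvPolynomial σ k := ∑ d ∈ p.support, monomial d (ℓ (monomial d (coeff d p)))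
  have hQ : Q = 0 := by
    refine funext_set (fun _ => {0}ᶜ) (fun _ => (Set.finite_singleton 0).infinite_compl) ?_
    intro t ht
    rw [map_zero, ← hℓJ _ (hJ t (fun i => ht i (Set.mem_univ i)) p hp)]
    conv_rhs => rw [p.as_sum]
    simp only [Q, map_sum, aeval_smul_X_monomial, map_smul, eval_monomial, smul_eq_mul, mul_comm]
  have hcoeff : coeff e Q = ℓ (monomial e (coeff e p)) := by
    classical
    simp [Q, coeff_sum, coeff_monomial, he]
  exact hℓe (by rw [← hcoeff, hQ, coeff_zero])

end MvPolynomial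

section EdgeIdeal

variable {σ τ : Type*}

section CommSemiring

variable {R : Type*} [CommSemiring R]

variable (R) in
noncomputable def edgeIdeal (O : Set (σ × τ)) :
    Ideal (MvPolynomial (σ ⊕ τ) R) :=
  Ideal.span ((fun v => X (.inl v.1) * X (.inr v.2)) '' O)

theorem span_setOf_eq_edgeIdeal (P : σ × τ → Prop) :
    Ideal.span {p : MvPolynomial (σ ⊕ τ) R | ∃ v, P v ∧ p = X (.inl v.1) * X (.inr v.2)} =
      edgeIdeal R {v | P v} := by
  simp only [edgeIdeal, Set.image, eq_comm, Set.mem_ofPred_eq]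

theorem mem_edgeIdeal_iff {O : Set (σ × τ)} {p : MvPolynomial (σ ⊕ τ) R} :
    p ∈ edgeIdeal R O ↔ ∀ e ∈ p.support, ∃ v ∈ O, e (.inl v.1) ≠ 0 ∧ e (.inr v.2) ≠ 0 := by
  classical
  have hgen : (fun v : σ × τ => (X (.inl v.1) * X (.inr v.2) : MvPolynomial (σ ⊕ τ) R)) =
      (fun s => monomial s 1) ∘
        fun v => Finsupp.single (.inl v.1) 1 + Finsupp.single (.inr v.2) 1 := by
    ext1 v; simp [X, monomial_mul]
  rw [edgeIdeal, hgen, Set.image_comp, mem_ideal_span_monomial_image]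
  simp only [Set.mem_image, exists_exists_and_eq_and]
  refine forall₂_congr fun e _ => exists_congr fun v => and_congr_right fun _ => ?_
  simp only [Finsupp.le_def, Sum.forall, Finsupp.add_apply, Finsupp.single_apply,
    Sum.inl.injEq, Sum.inr.injEq, reduceCtorEq, if_false, add_zero, zero_add]
  constructor
  · rintro ⟨h1, h2⟩
    exact ⟨Nat.one_le_iff_ne_zero.mp (by simpa using h1 v.1),
      Nat.one_le_iff_ne_zero.mp (by simpa using h2 v.2)⟩
  · rintro ⟨h1, h2⟩
    refine ⟨fun a => ?_, fun b => ?_⟩ <;> split_ifs <;> subst_vars <;> omega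

theorem edgeIdeal_le_span_X_image {O : Set (σ × τ)} {T : Set (σ ⊕ τ)}
    (hT : ∀ v ∈ O, .inl v.1 ∈ T ∨ .inr v.2 ∈ T) :
    edgeIdeal R O ≤ Ideal.span (X '' T) := by
  rw [edgeIdeal, Ideal.span_le]
  rintro _ ⟨v, hv, rfl⟩
  rcases hT v hv with h | h
  · exact Ideal.mul_mem_right _ _ (Ideal.subset_span ⟨_, h, rfl⟩)
  · exact Ideal.mul_mem_left _ _ (Ideal.subset_span ⟨_, h, rfl⟩)

end CommSemiring

theorem edgeIdeal_isRadical {R : Type*} [CommRing R] [IsReduced R] (O : Set (σ × τ)) :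
    (edgeIdeal R O).IsRadical := by
  intro p hp
  refine mem_edgeIdeal_iff.mpr fun e he => ?_
  by_contra! hnot
  -- unless some edge divides `e`, the variables absent from `e` cover all edges
  have hcover : ∀ v ∈ O, .inl v.1 ∈ {i | e i = 0} ∨ .inr v.2 ∈ {i | e i = 0} := fun v hv =>
    or_iff_not_imp_left.mpr (hnot v hv)
  have hpT := span_X_image_isRadical _ (Ideal.radical_mono (edgeIdeal_le_span_X_image hcover) hp)
  obtain ⟨i, hi, hei⟩ := mem_ideal_span_X_image.mp hpT e he
  exact hei hi

end EdgeIdeal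

section PositiveDegrees

variable {k : Type*} [CommSemiring k] {m n : ℕ}

theorem weight_wdeg_fst_eq_zero_iff (e : (Fin m ⊕ Fin n) →₀ ℕ) :
    (Finsupp.weight (wdeg m n) e).1 = 0 ↔ ∀ a, e (.inl a) = 0 := by
  simp [Finsupp.weight_apply, Finsupp.sum, Prod.fst_sum, Finset.sum_eq_zero_iff, wdeg]

theorem weight_wdeg_snd_eq_zero_iff (e : (Fin m ⊕ Fin n) →₀ ℕ) :
    (Finsupp.weight (wdeg m n) e).2 = 0 ↔ ∀ b, e (.inr b) = 0 := by
  simp [Finsupp.weight_apply, Finsupp.sum, Prod.snd_sum, Finset.sum_eq_zero_iff, wdeg]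

def ConcentratedInPositiveDegrees (J : Ideal (MvPolynomial (Fin m ⊕ Fin n) k)) : Prop :=
  ∀ p ∈ J, ∀ d : ℕ × ℕ, IsWeightedHomogeneous (wdeg m n) p d → (d.1 = 0 ∨ d.2 = 0) → p = 0

theorem edgeIdeal_concentratedInPositiveDegrees (O : Set (Fin m × Fin n)) :
    ConcentratedInPositiveDegrees (edgeIdeal k O) := by
  intro p hp d hd hd0
  by_contra hne
  obtain ⟨e, he⟩ := support_nonempty.mpr hne
  obtain ⟨v, -, h1, h2⟩ := mem_edgeIdeal_iff.mp hp e he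
  rw [← hd (mem_support_iff.mp he), weight_wdeg_fst_eq_zero_iff, weight_wdeg_snd_eq_zero_iff] at hd0
  exact hd0.elim (· _ |> h1) (· _ |> h2)

theorem ConcentratedInPositiveDegrees.exists_ne_zero [Nontrivial k]
    {J : Ideal (MvPolynomial (Fin m ⊕ Fin n) k)} (hJ : ConcentratedInPositiveDegrees J)
    {e : (Fin m ⊕ Fin n) →₀ ℕ} (he : monomial e 1 ∈ J) :
    (∃ a, e (.inl a) ≠ 0) ∧ ∃ b, e (.inr b) ≠ 0 := by
  have hpos : ¬((Finsupp.weight (wdeg m n) e).1 = 0 ∨ (Finsupp.weight (wdeg m n) e).2 = 0) :=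
    fun h0 => one_ne_zero <| monomial_eq_zero.mp <|
      hJ _ he _ (isWeightedHomogeneous_monomial _ _ _ rfl) h0
  simpa [weight_wdeg_fst_eq_zero_iff, weight_wdeg_snd_eq_zero_iff, not_or] using hpos

end PositiveDegrees

section ShiftMatrix

variable {k ι : Type*} [LinearOrder ι] {φ : ι → ι}

variable (k φ) in
def shiftMatrix [Zero k] [One k] : Matrix ι ι k :=
  .of fun r c => if r = c ∨ r = φ c then 1 else 0

theorem shiftMatrix_isUpperTriangular [Zero k] [One k] (hφ : ∀ c, φ c ≤ c) :
    (shiftMatrix k φ).IsUpperTriangular := by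
  intro r c hcr
  simp only [shiftMatrix, Matrix.of_apply]
  rw [if_neg]
  rintro (rfl | rfl)
  · exact lt_irrefl _ hcr
  · exact (hφ c).not_gt hcr

theorem isUnit_shiftMatrix [CommRing k] [Fintype ι] (hφ : ∀ c, φ c ≤ c) :
    IsUnit (shiftMatrix k φ) := by
  rw [Matrix.isUnit_iff_isUnit_det,
    Matrix.det_of_isUpperTriangular (shiftMatrix_isUpperTriangular hφ)]
  simp [shiftMatrix]

theorem sum_shiftMatrix_smul [Semiring k] [Fintype ι] {M : Type*} [AddCommMonoid M] [Module k M]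
    (Y : ι → M) (c : ι) :
    ∑ r, shiftMatrix k φ r c • Y r = if φ c = c then Y c else Y c + Y (φ c) := by
  split_ifs with hc
  · simp [shiftMatrix, hc, ite_smul]
  · have hentry : ∀ r, shiftMatrix k φ r c =
        (if r = c then 1 else 0) + if r = φ c then 1 else 0 := by
      intro r
      by_cases h1 : r = c <;> by_cases h2 : r = φ c <;> simp_all [shiftMatrix]
    simp [hentry, add_smul, Finset.sum_add_distrib, ite_smul]

end ShiftMatrix

section Borel

variable {k : Type*} [CommRing k] {m n : ℕ}

@[simp]
theorem borelAut_X_inl (g : Matrix (Fin m) (Fin m) k) (h : Matrix (Fin n) (Fin n) k) (i : Fin m) :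
    borelAut k m n g h (X (.inl i)) = ∑ j, g j i • X (.inl j) := by
  simp [borelAut]

@[simp]
theorem borelAut_X_inr (g : Matrix (Fin m) (Fin m) k) (h : Matrix (Fin n) (Fin n) k) (i : Fin n) :
    borelAut k m n g h (X (.inr i)) = ∑ j, h j i • X (.inr j) := by
  simp [borelAut]

theorem borelAut_mul (g g' : Matrix (Fin m) (Fin m) k) (h h' : Matrix (Fin n) (Fin n) k) :
    borelAut k m n (g * g') (h * h') = (borelAut k m n g h).comp (borelAut k m n g' h') := by
  ext (i | i) <;>
  · simp only [AlgHom.comp_apply, borelAut_X_inl, borelAut_X_inr, map_sum, map_smul,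
      Matrix.mul_apply, Finset.sum_smul, Finset.smul_sum, smul_smul]
    rw [Finset.sum_comm]
    simp only [mul_comm]

theorem borelAut_one : borelAut k m n 1 1 = AlgHom.id k _ := by
  ext (i | i) <;> simp [Matrix.one_apply]

theorem borelAut_diagonal (t : Fin m ⊕ Fin n → k) :
    borelAut k m n (Matrix.diagonal (t ∘ .inl)) (Matrix.diagonal (t ∘ .inr)) =
      aeval fun i => t i • X i := by
  ext (i | i) <;> simp [Matrix.diagonal_apply]

theorem BorelFixed.of_map_le {J : Ideal (MvPolynomial (Fin m ⊕ Fin n) k)}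
    (hJ : ∀ (g : Matrix (Fin m) (Fin m) k) (h : Matrix (Fin n) (Fin n) k), IsUnit g → IsUnit h →
      (∀ r c : Fin m, c < r → g r c = 0) → (∀ r c : Fin n, c < r → h r c = 0) →
      J.map (borelAut k m n g h) ≤ J) :
    BorelFixed J := by
  intro g h hg hh hgu hhu
  have := hg.invertible
  have := hh.invertible
  refine le_antisymm (hJ g h hg hh hgu hhu) fun p hp => ?_
  have hinv : borelAut k m n g h (borelAut k m n g⁻¹ h⁻¹ p) = p := by
    rw [← AlgHom.comp_apply, ← borelAut_mul, Matrix.mul_inv_of_invertible,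
      Matrix.mul_inv_of_invertible, borelAut_one, AlgHom.id_apply]
  rw [← hinv]
  exact Ideal.mem_map_of_mem _ (hJ _ _ (Matrix.isUnit_nonsing_inv_iff.mpr hg)
    (Matrix.isUnit_nonsing_inv_iff.mpr hh) (Matrix.blockTriangular_inv_of_blockTriangular hgu)
    (Matrix.blockTriangular_inv_of_blockTriangular hhu) (Ideal.mem_map_of_mem _ hp))

theorem map_borelAut_edgeIdeal_le {O : Set (Fin m × Fin n)} (hO : IsLowerSet O)
    {g : Matrix (Fin m) (Fin m) k} {h : Matrix (Fin n) (Fin n) k}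
    (hg : ∀ r c : Fin m, c < r → g r c = 0) (hh : ∀ r c : Fin n, c < r → h r c = 0) :
    (edgeIdeal k O).map (borelAut k m n g h) ≤ edgeIdeal k O := by
  rw [edgeIdeal, Ideal.map_span, Ideal.span_le]
  rintro _ ⟨_, ⟨v, hv, rfl⟩, rfl⟩
  rw [map_mul, borelAut_X_inl, borelAut_X_inr, Finset.sum_mul_sum]
  refine Ideal.sum_mem _ fun a _ => Ideal.sum_mem _ fun b _ => ?_
  rw [smul_mul_smul_comm]
  by_cases hab : a ≤ v.1 ∧ b ≤ v.2
  · exact Submodule.smul_of_tower_mem _ _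
      (Ideal.subset_span ⟨(a, b), hO (show (a, b) ≤ v from hab) hv, rfl⟩ :
        X (.inl a) * X (.inr b) ∈ edgeIdeal k O)
  · rcases not_and_or.mp hab with h1 | h1
    · simp [hg a v.1 (not_le.mp h1)]
    · simp [hh b v.2 (not_le.mp h1)]

theorem edgeIdeal_borelFixed {O : Set (Fin m × Fin n)} (hO : IsLowerSet O) :
    BorelFixed (edgeIdeal k O) :=
  .of_map_le fun _ _ _ _ hg hh => map_borelAut_edgeIdeal_le hO hg hh

theorem BorelFixed.rename_mem {J : Ideal (MvPolynomial (Fin m ⊕ Fin n) k)} (hB : BorelFixed J)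
    (hJ : IsMonomialIdeal J) {φ : Fin m → Fin m} {ψ : Fin n → Fin n}
    (hφ : ∀ c, φ c ≤ c) (hφφ : ∀ c, φ (φ c) = φ c) (hψ : ∀ c, ψ c ≤ c) (hψψ : ∀ c, ψ (ψ c) = ψ c)
    {p : MvPolynomial (Fin m ⊕ Fin n) k} (hp : p ∈ J) : rename (Sum.map φ ψ) p ∈ J := by
  have hfactor : rename (Sum.map φ ψ) = (killVars {i | Sum.map φ ψ i ≠ i}).comp
      (borelAut k m n (shiftMatrix k φ) (shiftMatrix k ψ)) := by
    ext (c | c) <;> simp [sum_shiftMatrix_smul] <;> split_ifs <;> simp_all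
  rw [hfactor, AlgHom.comp_apply]
  refine hJ.killVars_mem _ ?_
  rw [← hB _ _ (isUnit_shiftMatrix hφ) (isUnit_shiftMatrix hψ) (shiftMatrix_isUpperTriangular hφ)
    (shiftMatrix_isUpperTriangular hψ)]
  exact Ideal.mem_map_of_mem _ hp

theorem BorelFixed.rename_min_mem {J : Ideal (MvPolynomial (Fin m ⊕ Fin n) k)}
    (hB : BorelFixed J) (hJ : IsMonomialIdeal J) (a : Fin m) (b : Fin n)
    {p : MvPolynomial (Fin m ⊕ Fin n) k} (hp : p ∈ J) : rename (Sum.map (min a) (min b)) p ∈ J :=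
  hB.rename_mem hJ (fun _ => min_le_right _ _) (fun _ => by simp) (fun _ => min_le_right _ _)
    (fun _ => by simp) hp

theorem BorelFixed.isLowerSet_setOf_X_mul_X_mem {J : Ideal (MvPolynomial (Fin m ⊕ Fin n) k)}
    (hB : BorelFixed J) (hJ : IsMonomialIdeal J) :
    IsLowerSet {v : Fin m × Fin n | X (.inl v.1) * X (.inr v.2) ∈ J} := by
  intro w v hvw hw
  simpa [min_eq_left hvw.1, min_eq_left hvw.2] using hB.rename_min_mem hJ v.1 v.2 hw

theorem BorelFixed.X_mul_X_mem_of_monomial_mem {J : Ideal (MvPolynomial (Fin m ⊕ Fin n) k)}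
    (hB : BorelFixed J) (hrad : J.IsRadical) (hJ : IsMonomialIdeal J) {e : (Fin m ⊕ Fin n) →₀ ℕ}
    (he : monomial e 1 ∈ J) {a : Fin m} {b : Fin n} (ha : ∀ c, e (.inl c) ≠ 0 → a ≤ c)
    (hb : ∀ c, e (.inr c) ≠ 0 → b ≤ c) :
    X (.inl a) * X (.inr b) ∈ J := by
  have hren := hB.rename_min_mem hJ a b he
  rw [← prod_X_pow_eq_monomial, map_prod] at hren
  refine hrad ⟨e.sum fun _ n => n, Ideal.mem_of_dvd _ ?_ hren⟩
  rw [Finsupp.sum, ← Finset.prod_pow_eq_pow_sum]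
  refine Finset.prod_dvd_prod_of_dvd _ _ fun i hi => ?_
  rw [map_pow, rename_X]
  refine pow_dvd_pow_of_dvd ?_ _
  rcases i with c | c
  · simp [min_eq_left (ha c (Finsupp.mem_support_iff.mp hi))]
  · simp [min_eq_left (hb c (Finsupp.mem_support_iff.mp hi))]

end Borel

theorem BorelFixed.isMonomialIdeal {k : Type*} [Field k] [Infinite k] {m n : ℕ}
    {J : Ideal (MvPolynomial (Fin m ⊕ Fin n) k)} (hB : BorelFixed J) : IsMonomialIdeal J := by
  refine isMonomialIdeal_of_forall_aeval_smul_X_mem fun t ht p hp => ?_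
  have hunit {ι : Type} [Fintype ι] [DecidableEq ι] (s : ι → Fin m ⊕ Fin n) :
      IsUnit (Matrix.diagonal (t ∘ s)) :=
    Matrix.isUnit_diagonal.mpr (Pi.isUnit_iff.mpr fun i => (ht _).isUnit)
  rw [← borelAut_diagonal, ← hB _ _ (hunit _) (hunit _)
    (fun _ _ h => Matrix.diagonal_apply_ne _ h.ne') (fun _ _ h => Matrix.diagonal_apply_ne _ h.ne')]
  exact Ideal.mem_map_of_mem _ hp

theorem eq_edgeIdeal_of_borelFixed {k : Type*} [Field k] [Infinite k] {m n : ℕ}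
    {J : Ideal (MvPolynomial (Fin m ⊕ Fin n) k)} (hrad : J.IsRadical) (hB : BorelFixed J)
    (hpos : ConcentratedInPositiveDegrees J) :
    J = edgeIdeal k {v | X (.inl v.1) * X (.inr v.2) ∈ J} := by
  have hJ := hB.isMonomialIdeal
  refine le_antisymm (fun p hp => mem_edgeIdeal_iff.mpr fun e he => ?_) ?_
  · have he1 := hJ p hp e he
    obtain ⟨⟨a, ha⟩, ⟨b, hb⟩⟩ := hpos.exists_ne_zero he1
    obtain ⟨a₀, ha₀, ha₀min⟩ := wellFounded_lt.has_min {c | e (.inl c) ≠ 0} ⟨a, ha⟩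
    obtain ⟨b₀, hb₀, hb₀min⟩ := wellFounded_lt.has_min {c | e (.inr c) ≠ 0} ⟨b, hb⟩
    exact ⟨(a₀, b₀), hB.X_mul_X_mem_of_monomial_mem hrad hJ he1
      (fun c hc => not_lt.mp (ha₀min c hc)) (fun c hc => not_lt.mp (hb₀min c hc)), ha₀, hb₀⟩
  · rw [edgeIdeal, Ideal.span_le]
    rintro _ ⟨v, hv, rfl⟩
    exact hv

theorem IsLowerSet.exists_isAntichain_eq_setOf_exists_le {α : Type*} [PartialOrder α] [Finite α]
    {s : Set α} (hs : IsLowerSet s) :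
    ∃ A : Set α, IsAntichain (· ≤ ·) A ∧ s = {v | ∃ w ∈ A, v ≤ w} := by
  refine ⟨{x | Maximal (· ∈ s) x}, setOfPred_maximal_antichain _, Set.ext fun v => ?_⟩
  refine ⟨fun hv => ?_, fun ⟨w, hw, hvw⟩ => hs hvw hw.prop⟩
  obtain ⟨w, hvw, hw⟩ := s.toFinite.exists_le_maximal hv
  exact ⟨w, hw, hvw⟩

/-- An ideal `J ⊆ S` is radical, Borel-fixed and concentrated in positive degrees if and only
if `J = J_A` for some antichain `A` of `[m] × [n]`, where `J_A` is generated by the monomials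
`x_a y_b` with `(a,b)` in the order ideal `O(A)` generated by `A`. -/
theorem stmt2 {k : Type*} [Field k] [IsAlgClosed k] {m n : ℕ}
    (J : Ideal (MvPolynomial (Fin m ⊕ Fin n) k)) :
    (J.IsRadical ∧ BorelFixed J ∧
      (∀ p ∈ J, ∀ d : ℕ × ℕ, IsWeightedHomogeneous (wdeg m n) p d →
        (d.1 = 0 ∨ d.2 = 0) → p = 0)) ↔
    (∃ A : Set (Fin m × Fin n), IsAntichain (· ≤ ·) A ∧
      J = Ideal.span {p : MvPolynomial (Fin m ⊕ Fin n) k |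
        ∃ v : Fin m × Fin n, (∃ w ∈ A, v ≤ w) ∧
          p = X (Sum.inl v.1) * X (Sum.inr v.2)}) := by
  simp only [span_setOf_eq_edgeIdeal]
  constructor
  · rintro ⟨hrad, hB, hpos⟩
    obtain ⟨A, hA, hDA⟩ :=
      (hB.isLowerSet_setOf_X_mul_X_mem hB.isMonomialIdeal).exists_isAntichain_eq_setOf_exists_le
    exact ⟨A, hA, hDA ▸ eq_edgeIdeal_of_borelFixed hrad hB hpos⟩
  · rintro ⟨A, -, rfl⟩
    exact ⟨edgeIdeal_isRadical _, edgeIdeal_borelFixed (lowerClosure A).lower,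
      edgeIdeal_concentratedInPositiveDegrees _⟩
end

section
/- Let I_1, I_2 be radical ideals of a Noetherian ring with I_1 + I_2 = Q a prime ideal, and let I = I_1 ∩ I_2. Then every minimal prime of I_1 is either a minimal prime of I or equal to Q, and likewise for I_2. Consequently, for a fixed radical ideal I and fixed prime Q, there are only finitely many pairs (I_1, I_2) of radical ideals with I_1 ∩ I_2 = I and I_1 + I_2 = Q. -/
private lemma minPrimes_finite {R : Type*} [CommRing R] [IsNoetherianRing R] (I : Ideal R) :
    I.minimalPrimes.Finite := by
  rw [Ideal.minimalPrimes_eq_comap]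
  exact (minimalPrimes.finite_of_isNoetherianRing (R ⧸ I)).image _

private lemma key {R : Type*} [CommRing R] (I₁ I₂ : Ideal R) (hQ : (I₁ ⊔ I₂).IsPrime) :
    ∀ P ∈ I₁.minimalPrimes, P ∈ (I₁ ⊓ I₂).minimalPrimes ∨ P = I₁ ⊔ I₂ := by
  intro P hP
  have hPp : P.IsPrime := hP.1.1
  have hle : I₁ ⊓ I₂ ≤ P := le_trans inf_le_left hP.1.2
  obtain ⟨q, hq, hqP⟩ := Ideal.exists_minimalPrimes_le (J := P) hle
  have hqp : q.IsPrime := hq.1.1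
  have : I₁ ≤ q ∨ I₂ ≤ q := by
    have := hq.1.2
    rcases hqp.mul_le.mp (le_trans Ideal.mul_le_inf this) with h | h
    · exact Or.inl h
    · exact Or.inr h
  rcases this with h | h
  · -- q is prime over I₁ contained in P, so q = P, P minimal over I₁ ⊓ I₂
    have : P ≤ q := hP.2 ⟨hqp, h⟩ hqP
    exact Or.inl (le_antisymm hqP this ▸ hq)
  · -- I₂ ≤ q ≤ P, so I₁ ⊔ I₂ ≤ P; minimality gives P = I₁ ⊔ I₂
    have hQP : I₁ ⊔ I₂ ≤ P := sup_le hP.1.2 (le_trans h hqP)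
    have : P ≤ I₁ ⊔ I₂ := hP.2 ⟨hQ, le_sup_left⟩ hQP
    exact Or.inr (le_antisymm this hQP)

/-- Let `I₁, I₂` be radical ideals of a Noetherian ring with `I₁ + I₂ = Q` prime, and
`I = I₁ ∩ I₂`.  Then every minimal prime of `I₁` is a minimal prime of `I` or equal to `Q`,
and likewise for `I₂`.  Consequently, for a fixed radical ideal `I` and fixed prime `Q`,
there are only finitely many pairs `(I₁, I₂)` of radical ideals with `I₁ ∩ I₂ = I` and
`I₁ + I₂ = Q`. -/
theorem stmt5 {R : Type*} [CommRing R] [IsNoetherianRing R]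
    (I₁ I₂ : Ideal R) (h₁ : I₁.IsRadical) (h₂ : I₂.IsRadical)
    (hQ : (I₁ ⊔ I₂).IsPrime) :
    (∀ P ∈ I₁.minimalPrimes, P ∈ (I₁ ⊓ I₂).minimalPrimes ∨ P = I₁ ⊔ I₂) ∧
    (∀ P ∈ I₂.minimalPrimes, P ∈ (I₁ ⊓ I₂).minimalPrimes ∨ P = I₁ ⊔ I₂) ∧
    (∀ I Q : Ideal R, I.IsRadical → Q.IsPrime →
      {p : Ideal R × Ideal R | p.1.IsRadical ∧ p.2.IsRadical ∧
        p.1 ⊓ p.2 = I ∧ p.1 ⊔ p.2 = Q}.Finite) := by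
  refine ⟨key I₁ I₂ hQ, ?_, ?_⟩
  · intro P hP
    have := key I₂ I₁ (by rwa [sup_comm]) P hP
    rwa [inf_comm, sup_comm] at this
  · intro I Q hI hQ'
    have hS : (I.minimalPrimes ∪ {Q}).Finite :=
      (minPrimes_finite I).union (Set.finite_singleton Q)
    apply Set.Finite.of_finite_image
      (f := fun p => (p.1.minimalPrimes, p.2.minimalPrimes))
    · apply Set.Finite.subset (hS.finite_subsets.prod hS.finite_subsets)
      rintro ⟨s, t⟩ ⟨⟨p₁, p₂⟩, ⟨hr₁, hr₂, hinf, hsup⟩, heq⟩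
      obtain ⟨rfl, rfl⟩ := Prod.mk.injEq .. ▸ heq
      have hQprime : (p₁ ⊔ p₂).IsPrime := hsup ▸ hQ'
      constructor
      · intro P hP
        rcases key p₁ p₂ hQprime P hP with h | h
        · exact Or.inl (hinf ▸ h)
        · exact Or.inr (by simp [h, hsup])
      · intro P hP
        rcases key p₂ p₁ (by rwa [sup_comm]) P hP with h | h
        · rw [inf_comm] at h; exact Or.inl (hinf ▸ h)
        · exact Or.inr (by simp [← hsup, h, sup_comm])
    · rintro ⟨p₁, p₂⟩ ⟨hr₁, hr₂, -, -⟩ ⟨q₁, q₂⟩ ⟨hs₁, hs₂, -, -⟩ heq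
      obtain ⟨h1, h2⟩ := Prod.mk.injEq .. ▸ heq
      have e : ∀ (a b : Ideal R), a.IsRadical → b.IsRadical →
          a.minimalPrimes = b.minimalPrimes → a = b := by
        intro a b ha hb h
        rw [← ha.radical, ← hb.radical, ← Ideal.sInf_minimalPrimes,
          ← Ideal.sInf_minimalPrimes, h]
      exact Prod.ext (e _ _ hr₁ hs₁ h1) (e _ _ hr₂ hs₂ h2)
end

section
/- With the notation of the cutting process at cutting threshold q: the ideal J_A equals J_1 ∩ J_2, where J_1 = (y_b : b ≤ b_q) + (x_a y_b : a ≤ a_q, b ≥ b_q+1, (a,b) ≤ (a_ℓ,b_ℓ) for some ℓ ≤ q−1) and J_2 = (x_a : a ≤ a_q) + (x_a y_b : a ≥ a_q+1, b ≤ b_q, (a,b) ≤ (a_ℓ,b_ℓ) for some ℓ ≥ q+1). -/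
open MvPolynomial

section Aux

variable {k : Type*} [Field k] {m n : ℕ}

private lemma X_eq (u : Fin m ⊕ Fin n) :
    (X u : MvPolynomial (Fin m ⊕ Fin n) k) = monomial (Finsupp.single u 1) 1 := rfl

private lemma XX_eq (u v : Fin m ⊕ Fin n) :
    (X u * X v : MvPolynomial (Fin m ⊕ Fin n) k)
      = monomial (Finsupp.single u 1 + Finsupp.single v 1) 1 := by
  rw [X_eq, X_eq, monomial_mul, one_mul]

private lemma prod_set_eq (P : Fin m → Fin n → Prop) :
    {p : MvPolynomial (Fin m ⊕ Fin n) k | ∃ i j, P i j ∧ p = X (Sum.inl i) * X (Sum.inr j)}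
      = (fun d => monomial d (1 : k)) ''
        {d | ∃ i j, P i j ∧
          d = Finsupp.single (Sum.inl i) 1 + Finsupp.single (Sum.inr j) 1} := by
  ext p
  constructor
  · rintro ⟨i, j, h, rfl⟩
    exact ⟨_, ⟨i, j, h, rfl⟩, (XX_eq _ _).symm⟩
  · rintro ⟨d, ⟨i, j, h, rfl⟩, rfl⟩
    exact ⟨i, j, h, (XX_eq _ _).symm⟩

private lemma prod_set_eq3 (P Q R : Fin m → Fin n → Prop) :
    {p : MvPolynomial (Fin m ⊕ Fin n) k |
        ∃ i j, P i j ∧ Q i j ∧ R i j ∧ p = X (Sum.inl i) * X (Sum.inr j)}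
      = (fun d => monomial d (1 : k)) ''
        {d | ∃ i j, P i j ∧ Q i j ∧ R i j ∧
          d = Finsupp.single (Sum.inl i) 1 + Finsupp.single (Sum.inr j) 1} := by
  ext p
  constructor
  · rintro ⟨i, j, h1, h2, h3, rfl⟩
    exact ⟨_, ⟨i, j, h1, h2, h3, rfl⟩, (XX_eq _ _).symm⟩
  · rintro ⟨d, ⟨i, j, h1, h2, h3, rfl⟩, rfl⟩
    exact ⟨i, j, h1, h2, h3, (XX_eq _ _).symm⟩

private lemma varR_set_eq (P : Fin n → Prop) :
    {p : MvPolynomial (Fin m ⊕ Fin n) k | ∃ j, P j ∧ p = X (Sum.inr j)}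
      = (fun d => monomial d (1 : k)) ''
        {d | ∃ j, P j ∧ d = Finsupp.single (Sum.inr j : Fin m ⊕ Fin n) 1} := by
  ext p
  constructor
  · rintro ⟨j, h, rfl⟩
    exact ⟨_, ⟨j, h, rfl⟩, (X_eq _).symm⟩
  · rintro ⟨d, ⟨j, h, rfl⟩, rfl⟩
    exact ⟨j, h, (X_eq _).symm⟩

private lemma varL_set_eq (P : Fin m → Prop) :
    {p : MvPolynomial (Fin m ⊕ Fin n) k | ∃ i, P i ∧ p = X (Sum.inl i)}
      = (fun d => monomial d (1 : k)) ''
        {d | ∃ i, P i ∧ d = Finsupp.single (Sum.inl i : Fin m ⊕ Fin n) 1} := by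
  ext p
  constructor
  · rintro ⟨i, h, rfl⟩
    exact ⟨_, ⟨i, h, rfl⟩, (X_eq _).symm⟩
  · rintro ⟨d, ⟨i, h, rfl⟩, rfl⟩
    exact ⟨i, h, (X_eq _).symm⟩

private lemma pair_le {u v : Fin m ⊕ Fin n} (huv : u ≠ v) {x : (Fin m ⊕ Fin n) →₀ ℕ}
    (hu : 1 ≤ x u) (hv : 1 ≤ x v) :
    Finsupp.single u 1 + Finsupp.single v 1 ≤ x := by
  rw [Finsupp.le_def]
  intro w
  rcases eq_or_ne w u with rfl | h1
  · simpa [Finsupp.add_apply, Finsupp.single_apply, huv.symm] using hu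
  rcases eq_or_ne w v with rfl | h2
  · simpa [Finsupp.add_apply, Finsupp.single_apply, huv] using hv
  · simp [Finsupp.add_apply, Finsupp.single_apply, Ne.symm h1, Ne.symm h2]

end Aux

/-- Cutting process: with `A = {(a_1,b_1),…,(a_s,b_s)}` an antichain of `[m] × [n]`
(conventions `a_0 = 0`, `a_{s+1} = m`, `b_0 = n`, `b_{s+1} = 0`) and `q = ct(A)` its cutting
threshold (the smallest `q` such that for all `q+1 ≤ i ≤ s`: `a_i < m`, `b_i < n`,
`a_i = a_{i-1}+1`, `b_i = b_{i+1}+1`), the ideal `J_A` equals `J₁ ∩ J₂`, where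
`J₁ = (y_b : b ≤ b_q) + (x_a y_b : a ≤ a_q, b ≥ b_q+1, (a,b) ≤ (a_ℓ,b_ℓ) for some ℓ ≤ q−1)`
and
`J₂ = (x_a : a ≤ a_q) + (x_a y_b : a ≥ a_q+1, b ≤ b_q, (a,b) ≤ (a_ℓ,b_ℓ) for some ℓ ≥ q+1)`.
The variable `x_i` for `i : Fin m` has 1-indexed label `(i : ℕ) + 1`. -/
theorem stmt7 {k : Type*} [Field k] (m n s q : ℕ) (a b : ℕ → ℕ)
    (ha0 : a 0 = 0) (haS : a (s + 1) = m) (hb0 : b 0 = n) (hbS : b (s + 1) = 0)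
    (ha : ∀ i, 1 ≤ i → i ≤ s → 1 ≤ a i ∧ a i ≤ m)
    (hb : ∀ i, 1 ≤ i → i ≤ s → 1 ≤ b i ∧ b i ≤ n)
    (hamono : ∀ i j, 1 ≤ i → i < j → j ≤ s → a i < a j)
    (hbanti : ∀ i j, 1 ≤ i → i < j → j ≤ s → b j < b i)
    (hqs : q ≤ s)
    (hct : ∀ i, q + 1 ≤ i → i ≤ s →
      a i < m ∧ b i < n ∧ a i = a (i - 1) + 1 ∧ b i = b (i + 1) + 1)
    (hctmin : ∀ t < q, ¬ ∀ i, t + 1 ≤ i → i ≤ s →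
      a i < m ∧ b i < n ∧ a i = a (i - 1) + 1 ∧ b i = b (i + 1) + 1) :
    let jA : Ideal (MvPolynomial (Fin m ⊕ Fin n) k) := Ideal.span
      {p | ∃ (i : Fin m) (j : Fin n),
        (∃ ℓ, 1 ≤ ℓ ∧ ℓ ≤ s ∧ (i : ℕ) + 1 ≤ a ℓ ∧ (j : ℕ) + 1 ≤ b ℓ) ∧
        p = X (Sum.inl i) * X (Sum.inr j)}
    let J₁ : Ideal (MvPolynomial (Fin m ⊕ Fin n) k) := Ideal.span
      ({p | ∃ j : Fin n, (j : ℕ) + 1 ≤ b q ∧ p = X (Sum.inr j)} ∪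
       {p | ∃ (i : Fin m) (j : Fin n), (i : ℕ) + 1 ≤ a q ∧ b q + 1 ≤ (j : ℕ) + 1 ∧
          (∃ ℓ, 1 ≤ ℓ ∧ ℓ ≤ q - 1 ∧ (i : ℕ) + 1 ≤ a ℓ ∧ (j : ℕ) + 1 ≤ b ℓ) ∧
          p = X (Sum.inl i) * X (Sum.inr j)})
    let J₂ : Ideal (MvPolynomial (Fin m ⊕ Fin n) k) := Ideal.span
      ({p | ∃ i : Fin m, (i : ℕ) + 1 ≤ a q ∧ p = X (Sum.inl i)} ∪
       {p | ∃ (i : Fin m) (j : Fin n), a q + 1 ≤ (i : ℕ) + 1 ∧ (j : ℕ) + 1 ≤ b q ∧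
          (∃ ℓ, q + 1 ≤ ℓ ∧ ℓ ≤ s ∧ (i : ℕ) + 1 ≤ a ℓ ∧ (j : ℕ) + 1 ≤ b ℓ) ∧
          p = X (Sum.inl i) * X (Sum.inr j)})
    jA = J₁ ⊓ J₂ := by
  intro jA J₁ J₂
  have hjA : jA = Ideal.span ((fun d => monomial d (1 : k)) ''
      {d | ∃ (i : Fin m) (j : Fin n),
        (∃ ℓ, 1 ≤ ℓ ∧ ℓ ≤ s ∧ (i : ℕ) + 1 ≤ a ℓ ∧ (j : ℕ) + 1 ≤ b ℓ) ∧
        d = Finsupp.single (Sum.inl i) 1 + Finsupp.single (Sum.inr j) 1}) := by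
    show Ideal.span _ = _
    rw [prod_set_eq]
  have hJ1 : J₁ = Ideal.span ((fun d => monomial d (1 : k)) ''
      ({d | ∃ j : Fin n, (j : ℕ) + 1 ≤ b q ∧
          d = Finsupp.single (Sum.inr j : Fin m ⊕ Fin n) 1} ∪
       {d | ∃ (i : Fin m) (j : Fin n), (i : ℕ) + 1 ≤ a q ∧ b q + 1 ≤ (j : ℕ) + 1 ∧
          (∃ ℓ, 1 ≤ ℓ ∧ ℓ ≤ q - 1 ∧ (i : ℕ) + 1 ≤ a ℓ ∧ (j : ℕ) + 1 ≤ b ℓ) ∧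
          d = Finsupp.single (Sum.inl i) 1 + Finsupp.single (Sum.inr j) 1})) := by
    show Ideal.span _ = _
    rw [varR_set_eq, prod_set_eq3, ← Set.image_union]
  have hJ2 : J₂ = Ideal.span ((fun d => monomial d (1 : k)) ''
      ({d | ∃ i : Fin m, (i : ℕ) + 1 ≤ a q ∧
          d = Finsupp.single (Sum.inl i : Fin m ⊕ Fin n) 1} ∪
       {d | ∃ (i : Fin m) (j : Fin n), a q + 1 ≤ (i : ℕ) + 1 ∧ (j : ℕ) + 1 ≤ b q ∧
          (∃ ℓ, q + 1 ≤ ℓ ∧ ℓ ≤ s ∧ (i : ℕ) + 1 ≤ a ℓ ∧ (j : ℕ) + 1 ≤ b ℓ) ∧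
          d = Finsupp.single (Sum.inl i) 1 + Finsupp.single (Sum.inr j) 1})) := by
    show Ideal.span _ = _
    rw [varL_set_eq, prod_set_eq3, ← Set.image_union]
  rw [hjA, hJ1, hJ2]
  ext f
  rw [Submodule.mem_inf, mem_ideal_span_monomial_image, mem_ideal_span_monomial_image,
    mem_ideal_span_monomial_image]
  constructor
  · intro h
    constructor
    · -- jA ≤ J₁
      intro xi hxi
      obtain ⟨d, ⟨i, j, ⟨ℓ, hℓ1, hℓs, hia, hjb⟩, rfl⟩, hle⟩ := h xi hxi
      by_cases hjq : (j : ℕ) + 1 ≤ b q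
      · refine ⟨Finsupp.single (Sum.inr j) 1, Or.inl ⟨j, hjq, rfl⟩, le_trans ?_ hle⟩
        exact le_add_self
      · push_neg at hjq
        have hq1 : 1 ≤ q := by
          by_contra hq
          push_neg at hq
          interval_cases q
          rw [hb0] at hjq
          omega
        have hℓq : ℓ < q := by
          by_contra hge
          push_neg at hge
          rcases eq_or_lt_of_le hge with rfl | hlt
          · omega
          · have := hbanti q ℓ hq1 hlt hℓs
            omega
        have hiaq : (i : ℕ) + 1 ≤ a q := by
          have := hamono ℓ q hℓ1 hℓq hqs
          omega
        exact ⟨_, Or.inr ⟨i, j, hiaq, by omega, ⟨ℓ, hℓ1, by omega, hia, hjb⟩, rfl⟩, hle⟩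
    · -- jA ≤ J₂
      intro xi hxi
      obtain ⟨d, ⟨i, j, ⟨ℓ, hℓ1, hℓs, hia, hjb⟩, rfl⟩, hle⟩ := h xi hxi
      by_cases hiq : (i : ℕ) + 1 ≤ a q
      · refine ⟨Finsupp.single (Sum.inl i) 1, Or.inl ⟨i, hiq, rfl⟩, le_trans ?_ hle⟩
        exact le_self_add
      · push_neg at hiq
        have hℓq : q < ℓ := by
          by_contra hge
          push_neg at hge
          rcases eq_or_lt_of_le hge with rfl | hlt
          · omega
          · have := hamono ℓ q hℓ1 hlt hqs
            omega
        have hjbq : (j : ℕ) + 1 ≤ b q := by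
          rcases Nat.eq_zero_or_pos q with rfl | hq1
          · rw [hb0]; exact j.2
          · have := hbanti q ℓ hq1 hℓq hℓs
            omega
        exact ⟨_, Or.inr ⟨i, j, by omega, hjbq, ⟨ℓ, by omega, hℓs, hia, hjb⟩, rfl⟩, hle⟩
  · rintro ⟨h1, h2⟩ xi hxi
    obtain ⟨d1, hd1, hle1⟩ := h1 xi hxi
    obtain ⟨d2, hd2, hle2⟩ := h2 xi hxi
    rcases hd1 with hd1 | ⟨i, j, hiq, hjq, ⟨ℓ, hℓ1, hℓq, hia, hjb⟩, rfl⟩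
    swap
    · -- K₁-generator, already a jA generator
      exact ⟨_, ⟨i, j, ⟨ℓ, hℓ1, by omega, hia, hjb⟩, rfl⟩, hle1⟩
    rcases hd2 with hd2 | ⟨i, j, hiq, hjq, ⟨ℓ, hℓq, hℓs, hia, hjb⟩, rfl⟩
    swap
    · -- K₂-generator
      exact ⟨_, ⟨i, j, ⟨ℓ, by omega, hℓs, hia, hjb⟩, rfl⟩, hle2⟩
    -- both variable generators: combine with ℓ = q
    obtain ⟨j, hjq, rfl⟩ := hd1
    obtain ⟨i, hiq, rfl⟩ := hd2
    have hq1 : 1 ≤ q := by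
      by_contra hq
      push_neg at hq
      interval_cases q
      rw [ha0] at hiq
      omega
    refine ⟨Finsupp.single (Sum.inl i) 1 + Finsupp.single (Sum.inr j) 1,
      ⟨i, j, ⟨q, hq1, hqs, hiq, hjq⟩, rfl⟩, ?_⟩
    refine pair_le (by simp) ?_ ?_
    · simpa using Finsupp.single_le_iff.mp hle2
    · simpa using Finsupp.single_le_iff.mp hle1
end

section
/- Both ideals J_1 and J_2 in the cutting process are Borel-fixed (satisfy the exchange properties), and consequently J_A = J_1 ∩ J_2 is Borel-fixed. -/
open MvPolynomial

/-- The exchange properties for an ideal of the bigraded polynomial ring: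
`x_h u ∈ J` whenever `x_i u ∈ J` and `h < i`, and likewise for the `y` variables.
This is the Borel-fixed property for radical monomial ideals. -/
def ExchangeFixed {k : Type*} [Field k] {m n : ℕ}
    (J : Ideal (MvPolynomial (Fin m ⊕ Fin n) k)) : Prop :=
  (∀ (u : (Fin m ⊕ Fin n) →₀ ℕ) (i h : Fin m), h < i →
      monomial (u + Finsupp.single (Sum.inl i) 1) (1 : k) ∈ J →
      monomial (u + Finsupp.single (Sum.inl h) 1) (1 : k) ∈ J) ∧
  (∀ (u : (Fin m ⊕ Fin n) →₀ ℕ) (i h : Fin n), h < i →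
      monomial (u + Finsupp.single (Sum.inr i) 1) (1 : k) ∈ J →
      monomial (u + Finsupp.single (Sum.inr h) 1) (1 : k) ∈ J)


set_option linter.unusedSectionVars false
set_option maxHeartbeats 1000000

section helpers
variable {σ : Type*} [DecidableEq σ]

lemma le_of_le_add_single {t u : σ →₀ ℕ} {i : σ}
    (ht : t ≤ u + Finsupp.single i 1) (hti : t i = 0) : t ≤ u := by
  rw [Finsupp.le_def] at ht ⊢
  intro v
  rcases eq_or_ne v i with rfl | hv
  · simp [hti]
  · have := ht v
    simpa [Finsupp.single_apply, Ne.symm hv] using this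

lemma swap_le (u : σ →₀ ℕ) {i h j : σ} (hij : j ≠ i) (hhj : j ≠ h)
    (ht : Finsupp.single i 1 + Finsupp.single j 1 ≤ u + Finsupp.single i 1) :
    Finsupp.single h 1 + Finsupp.single j 1 ≤ u + Finsupp.single h 1 := by
  have hj : 1 ≤ u j := by
    have := Finsupp.le_def.mp ht j
    simpa [Finsupp.single_apply, Ne.symm hij] using this
  rw [Finsupp.le_def]
  intro v
  simp only [Finsupp.add_apply, Finsupp.single_apply]
  by_cases h1 : h = v <;> by_cases h2 : j = v <;> simp_all

lemma swap_le' (u : σ →₀ ℕ) {i h j : σ} (hij : j ≠ i) (hhj : j ≠ h)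
    (ht : Finsupp.single j 1 + Finsupp.single i 1 ≤ u + Finsupp.single i 1) :
    Finsupp.single j 1 + Finsupp.single h 1 ≤ u + Finsupp.single h 1 := by
  rw [add_comm] at ht
  have := swap_le u hij hhj ht
  rwa [add_comm] at this

lemma mono_mem_span_image {k : Type*} [Field k] {s : Set (σ →₀ ℕ)} {u : σ →₀ ℕ} :
    monomial u (1 : k) ∈ Ideal.span ((fun t => monomial t (1 : k)) '' s) ↔ ∃ t ∈ s, t ≤ u := by
  rw [MvPolynomial.mem_ideal_span_monomial_image]
  simp [MvPolynomial.support_monomial]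

lemma X_eq_mono {k : Type*} [Field k] (v : σ) :
    (X v : MvPolynomial σ k) = monomial (Finsupp.single v 1) 1 := rfl

lemma XX_eq_mono {k : Type*} [Field k] (v w : σ) :
    (X v * X w : MvPolynomial σ k) = monomial (Finsupp.single v 1 + Finsupp.single w 1) 1 := by
  rw [X_eq_mono, X_eq_mono, monomial_mul, one_mul]
end helpers


/-- Both ideals `J₁` and `J₂` of the cutting process are Borel-fixed (satisfy the exchange
properties), and consequently `J_A = J₁ ∩ J₂` is Borel-fixed.  Setting as in the cutting
process: `A` an antichain of `[m] × [n]` with cutting threshold `q`. -/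
theorem stmt8 {k : Type*} [Field k] (m n s q : ℕ) (a b : ℕ → ℕ)
    (ha0 : a 0 = 0) (haS : a (s + 1) = m) (hb0 : b 0 = n) (hbS : b (s + 1) = 0)
    (ha : ∀ i, 1 ≤ i → i ≤ s → 1 ≤ a i ∧ a i ≤ m)
    (hb : ∀ i, 1 ≤ i → i ≤ s → 1 ≤ b i ∧ b i ≤ n)
    (hamono : ∀ i j, 1 ≤ i → i < j → j ≤ s → a i < a j)
    (hbanti : ∀ i j, 1 ≤ i → i < j → j ≤ s → b j < b i)
    (hqs : q ≤ s)
    (hct : ∀ i, q + 1 ≤ i → i ≤ s →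
      a i < m ∧ b i < n ∧ a i = a (i - 1) + 1 ∧ b i = b (i + 1) + 1)
    (hctmin : ∀ t < q, ¬ ∀ i, t + 1 ≤ i → i ≤ s →
      a i < m ∧ b i < n ∧ a i = a (i - 1) + 1 ∧ b i = b (i + 1) + 1) :
    let J₁ : Ideal (MvPolynomial (Fin m ⊕ Fin n) k) := Ideal.span
      ({p | ∃ j : Fin n, (j : ℕ) + 1 ≤ b q ∧ p = X (Sum.inr j)} ∪
       {p | ∃ (i : Fin m) (j : Fin n), (i : ℕ) + 1 ≤ a q ∧ b q + 1 ≤ (j : ℕ) + 1 ∧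
          (∃ ℓ, 1 ≤ ℓ ∧ ℓ ≤ q - 1 ∧ (i : ℕ) + 1 ≤ a ℓ ∧ (j : ℕ) + 1 ≤ b ℓ) ∧
          p = X (Sum.inl i) * X (Sum.inr j)})
    let J₂ : Ideal (MvPolynomial (Fin m ⊕ Fin n) k) := Ideal.span
      ({p | ∃ i : Fin m, (i : ℕ) + 1 ≤ a q ∧ p = X (Sum.inl i)} ∪
       {p | ∃ (i : Fin m) (j : Fin n), a q + 1 ≤ (i : ℕ) + 1 ∧ (j : ℕ) + 1 ≤ b q ∧
          (∃ ℓ, q + 1 ≤ ℓ ∧ ℓ ≤ s ∧ (i : ℕ) + 1 ≤ a ℓ ∧ (j : ℕ) + 1 ≤ b ℓ) ∧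
          p = X (Sum.inl i) * X (Sum.inr j)})
    ExchangeFixed J₁ ∧ ExchangeFixed J₂ ∧ ExchangeFixed (J₁ ⊓ J₂) := by
  intro J₁ J₂
  -- exponent-vector descriptions of the generating sets
  set T₁ : Set ((Fin m ⊕ Fin n) →₀ ℕ) :=
    {t | ∃ j : Fin n, (j : ℕ) + 1 ≤ b q ∧ t = Finsupp.single (Sum.inr j) 1} ∪
    {t | ∃ (i : Fin m) (j : Fin n), (i : ℕ) + 1 ≤ a q ∧ b q + 1 ≤ (j : ℕ) + 1 ∧
        (∃ ℓ, 1 ≤ ℓ ∧ ℓ ≤ q - 1 ∧ (i : ℕ) + 1 ≤ a ℓ ∧ (j : ℕ) + 1 ≤ b ℓ) ∧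
        t = Finsupp.single (Sum.inl i) 1 + Finsupp.single (Sum.inr j) 1} with hT₁
  set T₂ : Set ((Fin m ⊕ Fin n) →₀ ℕ) :=
    {t | ∃ i : Fin m, (i : ℕ) + 1 ≤ a q ∧ t = Finsupp.single (Sum.inl i) 1} ∪
    {t | ∃ (i : Fin m) (j : Fin n), a q + 1 ≤ (i : ℕ) + 1 ∧ (j : ℕ) + 1 ≤ b q ∧
        (∃ ℓ, q + 1 ≤ ℓ ∧ ℓ ≤ s ∧ (i : ℕ) + 1 ≤ a ℓ ∧ (j : ℕ) + 1 ≤ b ℓ) ∧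
        t = Finsupp.single (Sum.inl i) 1 + Finsupp.single (Sum.inr j) 1} with hT₂
  have hJ₁ : J₁ = Ideal.span ((fun t => monomial t (1 : k)) '' T₁) := by
    show Ideal.span _ = _
    congr 1
    ext p
    simp only [hT₁, Set.mem_union, Set.mem_setOf_eq, Set.mem_image]
    constructor
    · rintro (⟨j, hj, rfl⟩ | ⟨i, j, h1, h2, h3, rfl⟩)
      · exact ⟨_, Or.inl ⟨j, hj, rfl⟩, (X_eq_mono _).symm⟩
      · exact ⟨_, Or.inr ⟨i, j, h1, h2, h3, rfl⟩, (XX_eq_mono _ _).symm⟩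
    · rintro ⟨t, (⟨j, hj, rfl⟩ | ⟨i, j, h1, h2, h3, rfl⟩), rfl⟩
      · exact Or.inl ⟨j, hj, (X_eq_mono _)⟩
      · exact Or.inr ⟨i, j, h1, h2, h3, (XX_eq_mono _ _).symm⟩
  have hJ₂ : J₂ = Ideal.span ((fun t => monomial t (1 : k)) '' T₂) := by
    show Ideal.span _ = _
    congr 1
    ext p
    simp only [hT₂, Set.mem_union, Set.mem_setOf_eq, Set.mem_image]
    constructor
    · rintro (⟨i, hi, rfl⟩ | ⟨i, j, h1, h2, h3, rfl⟩)
      · exact ⟨_, Or.inl ⟨i, hi, rfl⟩, (X_eq_mono _).symm⟩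
      · exact ⟨_, Or.inr ⟨i, j, h1, h2, h3, rfl⟩, (XX_eq_mono _ _).symm⟩
    · rintro ⟨t, (⟨i, hi, rfl⟩ | ⟨i, j, h1, h2, h3, rfl⟩), rfl⟩
      · exact Or.inl ⟨i, hi, (X_eq_mono _)⟩
      · exact Or.inr ⟨i, j, h1, h2, h3, (XX_eq_mono _ _).symm⟩
  have hmem₁ : ∀ u : (Fin m ⊕ Fin n) →₀ ℕ,
      monomial u (1 : k) ∈ J₁ ↔ ∃ t ∈ T₁, t ≤ u := fun u => by
    rw [hJ₁]; exact mono_mem_span_image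
  have hmem₂ : ∀ u : (Fin m ⊕ Fin n) →₀ ℕ,
      monomial u (1 : k) ∈ J₂ ↔ ∃ t ∈ T₂, t ≤ u := fun u => by
    rw [hJ₂]; exact mono_mem_span_image
  have hE₁ : ExchangeFixed J₁ := by
    constructor
    · -- x-exchange for J₁
      intro u i h hhi hm
      rw [hmem₁] at hm ⊢
      obtain ⟨t, (⟨j, hj, rfl⟩ | ⟨i', j, h1, h2, h3, rfl⟩), hle⟩ := hm
      · exact ⟨_, Or.inl ⟨j, hj, rfl⟩,
          (le_of_le_add_single hle (by simp)).trans le_self_add⟩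
      · rcases eq_or_ne i' i with rfl | hne
        · refine ⟨_, Or.inr ⟨h, j, ?_, h2, ?_, rfl⟩, ?_⟩
          · have : (h : ℕ) < (i' : ℕ) := hhi
            omega
          · obtain ⟨ℓ, hℓ1, hℓ2, hℓ3, hℓ4⟩ := h3
            have : (h : ℕ) < (i' : ℕ) := hhi
            exact ⟨ℓ, hℓ1, hℓ2, by omega, hℓ4⟩
          · exact swap_le u (by simp) (by simp) hle
        · refine ⟨_, Or.inr ⟨i', j, h1, h2, h3, rfl⟩,
            (le_of_le_add_single hle ?_).trans le_self_add⟩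
          simp [Finsupp.single_apply, hne]
    · -- y-exchange for J₁
      intro u i h hhi hm
      rw [hmem₁] at hm ⊢
      have hhi' : (h : ℕ) < (i : ℕ) := hhi
      obtain ⟨t, (⟨j, hj, rfl⟩ | ⟨i', j, h1, h2, h3, rfl⟩), hle⟩ := hm
      · rcases eq_or_ne j i with rfl | hne
        · exact ⟨_, Or.inl ⟨h, by omega, rfl⟩, le_add_self⟩
        · refine ⟨_, Or.inl ⟨j, hj, rfl⟩,
            (le_of_le_add_single hle ?_).trans le_self_add⟩
          simp [Finsupp.single_apply, hne]
      · rcases eq_or_ne j i with rfl | hne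
        · by_cases hc : (h : ℕ) + 1 ≤ b q
          · exact ⟨_, Or.inl ⟨h, hc, rfl⟩, le_add_self⟩
          · refine ⟨_, Or.inr ⟨i', h, h1, by omega, ?_, rfl⟩, ?_⟩
            · obtain ⟨ℓ, hℓ1, hℓ2, hℓ3, hℓ4⟩ := h3
              exact ⟨ℓ, hℓ1, hℓ2, hℓ3, by omega⟩
            · exact swap_le' u (by simp) (by simp) hle
        · refine ⟨_, Or.inr ⟨i', j, h1, h2, h3, rfl⟩,
            (le_of_le_add_single hle ?_).trans le_self_add⟩
          simp [Finsupp.single_apply, hne]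
  have hE₂ : ExchangeFixed J₂ := by
    constructor
    · -- x-exchange for J₂
      intro u i h hhi hm
      rw [hmem₂] at hm ⊢
      have hhi' : (h : ℕ) < (i : ℕ) := hhi
      obtain ⟨t, (⟨i'', hi'', rfl⟩ | ⟨i', j, h1, h2, h3, rfl⟩), hle⟩ := hm
      · rcases eq_or_ne i'' i with rfl | hne
        · exact ⟨_, Or.inl ⟨h, by omega, rfl⟩, le_add_self⟩
        · refine ⟨_, Or.inl ⟨i'', hi'', rfl⟩,
            (le_of_le_add_single hle ?_).trans le_self_add⟩
          simp [Finsupp.single_apply, hne]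
      · rcases eq_or_ne i' i with rfl | hne
        · by_cases hc : (h : ℕ) + 1 ≤ a q
          · exact ⟨_, Or.inl ⟨h, hc, rfl⟩, le_add_self⟩
          · refine ⟨_, Or.inr ⟨h, j, by omega, h2, ?_, rfl⟩, ?_⟩
            · obtain ⟨ℓ, hℓ1, hℓ2, hℓ3, hℓ4⟩ := h3
              exact ⟨ℓ, hℓ1, hℓ2, by omega, hℓ4⟩
            · exact swap_le u (by simp) (by simp) hle
        · refine ⟨_, Or.inr ⟨i', j, h1, h2, h3, rfl⟩,
            (le_of_le_add_single hle ?_).trans le_self_add⟩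
          simp [Finsupp.single_apply, hne]
    · -- y-exchange for J₂
      intro u i h hhi hm
      rw [hmem₂] at hm ⊢
      have hhi' : (h : ℕ) < (i : ℕ) := hhi
      obtain ⟨t, (⟨i'', hi'', rfl⟩ | ⟨i', j, h1, h2, h3, rfl⟩), hle⟩ := hm
      · exact ⟨_, Or.inl ⟨i'', hi'', rfl⟩,
          (le_of_le_add_single hle (by simp)).trans le_self_add⟩
      · rcases eq_or_ne j i with rfl | hne
        · refine ⟨_, Or.inr ⟨i', h, h1, by omega, ?_, rfl⟩, ?_⟩
          · obtain ⟨ℓ, hℓ1, hℓ2, hℓ3, hℓ4⟩ := h3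
            exact ⟨ℓ, hℓ1, hℓ2, hℓ3, by omega⟩
          · exact swap_le' u (by simp) (by simp) hle
        · refine ⟨_, Or.inr ⟨i', j, h1, h2, h3, rfl⟩,
            (le_of_le_add_single hle ?_).trans le_self_add⟩
          simp [Finsupp.single_apply, hne]
  refine ⟨hE₁, hE₂, ?_, ?_⟩
  · intro u i h hhi hm
    rw [Ideal.mem_inf] at hm ⊢
    exact ⟨hE₁.1 u i h hhi hm.1, hE₂.1 u i h hhi hm.2⟩
  · intro u i h hhi hm
    rw [Ideal.mem_inf] at hm ⊢
    exact ⟨hE₁.2 u i h hhi hm.1, hE₂.2 u i h hhi hm.2⟩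
end

section
/- Let A = {(a_1,b_1),...,(a_s,b_s)} be an antichain of [m]×[n] (a_i increasing, b_i decreasing), with a_0 = 0, a_{s+1} = m, b_0 = n, b_{s+1} = 0. The fine multidegree component of T_A = [Hom_S(J_A, S/J_A)]_{(0,0)} in degree d = e_j − e_i + f_h − f_k (i ≠ j, h ≠ k) is nonzero (and then one-dimensional) if and only if there is 1 ≤ ℓ ≤ s with (i,k) = (a_ℓ, b_ℓ), a_{ℓ−1} = a_ℓ − 1, b_{ℓ+1} = b_ℓ − 1, a_ℓ + 1 ≤ j ≤ a_{ℓ+1}, and b_ℓ + 1 ≤ h ≤ b_{ℓ−1}. -/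
open MvPolynomial

/-- The monomial ideal generated by `x_a y_b` for `(a,b)` in a set `O ⊆ [m] × [n]`. -/
noncomputable def jA (k : Type*) [Field k] (m n : ℕ) (O : Set (Fin m × Fin n)) :
    Ideal (MvPolynomial (Fin m ⊕ Fin n) k) :=
  Ideal.span {p | ∃ v ∈ O, p = X (Sum.inl v.1) * X (Sum.inr v.2)}

/-- An `S`-linear map `φ : J → S/J` is fine-multigraded of multidegree `d ∈ ℤ^m ⊕ ℤ^n`
if it sends each monomial `x^u ∈ J` to a scalar multiple of `x^{u+d}` (or to `0`). -/
def FineHomog {k : Type*} [Field k] {m n : ℕ} (O : Set (Fin m × Fin n))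
    (d : (Fin m ⊕ Fin n) →₀ ℤ)
    (φ : ↥(jA k m n O) →ₗ[MvPolynomial (Fin m ⊕ Fin n) k]
      (MvPolynomial (Fin m ⊕ Fin n) k ⧸ jA k m n O)) : Prop :=
  ∀ (u : (Fin m ⊕ Fin n) →₀ ℕ) (h : monomial u (1 : k) ∈ jA k m n O),
    φ ⟨monomial u 1, h⟩ = 0 ∨
    ∃ (c : k) (v : (Fin m ⊕ Fin n) →₀ ℕ), c ≠ 0 ∧
      (∀ t, (v t : ℤ) = (u t : ℤ) + d t) ∧
      φ ⟨monomial u 1, h⟩ = c • Ideal.Quotient.mk (jA k m n O) (monomial v 1)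

/-!
A fine-graded map `φ : J_A → S/J_A` of degree `deg (x_j y_h) - deg (x_i y_k)` with `i ≠ j`,
`h ≠ k` can be nonzero on a monomial `x^u` only if `x_i y_k ∣ x^u`. So it kills every other
generator of `J_A` and is determined by `φ (x_i y_k) = c • x_j y_h`; this gives the
one-dimensionality. A nonzero such `φ` exists iff `x_j y_h ∉ J_A` and multiplication by
`x_j y_h / x_i y_k` respects the linear syzygies `y_b (x_i y_k) = y_k (x_i y_b)` and
`x_a (x_i y_k) = x_i (x_a y_k)`, i.e. iff `IsTangentPair O (i, k) (j, h)`. For the staircase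
`O(A)`, testing these conditions at the neighbours `(i ± 1, k)`, `(i, k ± 1)` of `(i, k)` shows
that `(i, k)` is a corner `(a_ℓ, b_ℓ)` and compares `(j, h)` with the corners `ℓ ± 1`.
-/

open Set Function

section TangentPair

variable {α β : Type*}

structure IsTangentPair (O : Set (α × β)) (p q : α × β) : Prop where
  mem : p ∈ O
  notMem : q ∉ O
  row : ∀ y, (p.1, y) ∈ O → y ≠ p.2 → (q.1, y) ∈ O
  col : ∀ x, (x, p.2) ∈ O → x ≠ p.1 → (x, q.2) ∈ O

theorem isTangentPair_preimage_iff {α' β' : Type*} {f : α → α'} {g : β → β'}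
    (hf : Injective f) (hg : Injective g) {O : Set (α' × β')} (hO : O ⊆ range f ×ˢ range g)
    {p q : α × β} :
    IsTangentPair (Prod.map f g ⁻¹' O) p q ↔ IsTangentPair O (Prod.map f g p) (Prod.map f g q) := by
  constructor
  · rintro ⟨hp, hq, hrow, hcol⟩
    refine ⟨hp, hq, fun y hy hne => ?_, fun x hx hne => ?_⟩
    · obtain ⟨y, rfl⟩ := (hO hy).2
      exact hrow y hy (ne_of_apply_ne g hne)
    · obtain ⟨x, rfl⟩ := (hO hx).1
      exact hcol x hx (ne_of_apply_ne f hne)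
  · rintro ⟨hp, hq, hrow, hcol⟩
    exact ⟨hp, hq, fun y hy hne => hrow (g y) hy (hg.ne hne),
      fun x hx hne => hcol (f x) hx (hf.ne hne)⟩

/-- The generator obtained from `x_{v.1} y_{v.2}` by substituting `x_{q.1}` for `x_{p.1}` and
`y_{q.2}` for `y_{p.2}`. -/
def shiftPoint [DecidableEq α] [DecidableEq β] (p q v : α × β) : α × β :=
  (if v.1 = p.1 then q.1 else v.1, if v.2 = p.2 then q.2 else v.2)

theorem IsTangentPair.shiftPoint_mem [DecidableEq α] [DecidableEq β] {O : Set (α × β)}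
    {p q v : α × β} (ht : IsTangentPair O p q) (hv : v ∈ O) (hvp : v ≠ p) :
    shiftPoint p q v ∈ O := by
  obtain ⟨x, y⟩ := v
  by_cases hx : x = p.1 <;> by_cases hy : y = p.2 <;>
    simp only [shiftPoint, hx, hy, if_true, if_false]
  · exact absurd (Prod.ext hx hy) hvp
  · exact ht.row y (hx ▸ hv) hy
  · exact ht.col x (hy ▸ hv) hx
  · exact hv

end TangentPair

theorem MvPolynomial.map_mul_of_mem_span {σ R M : Type*} [CommSemiring R] [AddCommMonoid M]
    [Module (MvPolynomial σ R) M] [Module R M] [IsScalarTower R (MvPolynomial σ R) M]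
    (Ψ : MvPolynomial σ R →ₗ[R] M) {G : Set (MvPolynomial σ R)}
    (hG : ∀ g ∈ G, ∀ μ, Ψ (monomial μ (1 : R) * g) = monomial μ (1 : R) • Ψ g)
    {f : MvPolynomial σ R} (hf : f ∈ Ideal.span G) (r : MvPolynomial σ R) :
    Ψ (r * f) = r • Ψ f := by
  induction hf using Submodule.span_induction generalizing r with
  | mem g hg =>
    induction r using MvPolynomial.induction_on' with
    | monomial μ c =>
      rw [show monomial μ c = c • monomial μ (1 : R) by rw [smul_monomial, smul_eq_mul, mul_one],
        smul_mul_assoc, map_smul, hG g hg, smul_assoc]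
    | add r r' hr hr' => rw [add_mul, map_add, hr, hr', add_smul]
  | zero => rw [mul_zero, map_zero, smul_zero]
  | add x y _ _ hx hy => rw [mul_add, map_add, map_add, hx, hy, smul_add]
  | smul t x _ hx => rw [smul_eq_mul, ← mul_assoc, hx, hx, mul_smul]

section MonomialIdeal

variable {k : Type*} [Field k] {m n : ℕ} {O : Set (Fin m × Fin n)} {p q : Fin m × Fin n}

local notation "S" => MvPolynomial (Fin m ⊕ Fin n) k
local notation "J" => jA k m n O

noncomputable def genExp (v : Fin m × Fin n) : (Fin m ⊕ Fin n) →₀ ℕ :=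
  Finsupp.single (Sum.inl v.1) 1 + Finsupp.single (Sum.inr v.2) 1

@[simp]
theorem genExp_inl (v : Fin m × Fin n) (x : Fin m) :
    genExp v (Sum.inl x) = if v.1 = x then 1 else 0 := by
  simp [genExp, Finsupp.single_apply]

@[simp]
theorem genExp_inr (v : Fin m × Fin n) (y : Fin n) :
    genExp v (Sum.inr y) = if v.2 = y then 1 else 0 := by
  simp [genExp, Finsupp.single_apply]

theorem genExp_le_iff {v : Fin m × Fin n} {u : (Fin m ⊕ Fin n) →₀ ℕ} :
    genExp v ≤ u ↔ 1 ≤ u (Sum.inl v.1) ∧ 1 ≤ u (Sum.inr v.2) := by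
  refine ⟨fun h => ⟨by simpa using h (Sum.inl v.1), by simpa using h (Sum.inr v.2)⟩, ?_⟩
  rintro ⟨h1, h2⟩ (x | y)
  · simp only [genExp_inl]; split_ifs with hx <;> simp_all
  · simp only [genExp_inr]; split_ifs with hy <;> simp_all

@[simp]
theorem genExp_le_genExp_iff {v w : Fin m × Fin n} : genExp v ≤ genExp w ↔ v = w := by
  rw [genExp_le_iff, Prod.ext_iff, genExp_inl, genExp_inr]
  split_ifs <;> grind

theorem eq_or_eq_of_genExp_le_single_inl_add {v w : Fin m × Fin n} {x : Fin m}
    (h : genExp w ≤ Finsupp.single (Sum.inl x) 1 + genExp v) : w = v ∨ w = (x, v.2) := by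
  obtain ⟨h1, h2⟩ := genExp_le_iff.1 h
  simp only [Finsupp.add_apply, Finsupp.single_apply, genExp_inl, genExp_inr,
    Sum.inl.injEq, reduceCtorEq, if_false, zero_add] at h1 h2
  split_ifs at h1 h2 <;> simp_all [Prod.ext_iff]

theorem eq_or_eq_of_genExp_le_single_inr_add {v w : Fin m × Fin n} {y : Fin n}
    (h : genExp w ≤ Finsupp.single (Sum.inr y) 1 + genExp v) : w = v ∨ w = (v.1, y) := by
  obtain ⟨h1, h2⟩ := genExp_le_iff.1 h
  simp only [Finsupp.add_apply, Finsupp.single_apply, genExp_inl, genExp_inr,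
    Sum.inr.injEq, reduceCtorEq, if_false, zero_add] at h1 h2
  split_ifs at h1 h2 <;> simp_all [Prod.ext_iff]

theorem jA_eq_span :
    jA k m n O = Ideal.span ((fun u => monomial u (1 : k)) '' (genExp '' O)) := by
  rw [jA, Set.image_image]
  congr 1
  ext f
  simp [genExp, X, monomial_mul, eq_comm]

theorem monomial_mem_jA_iff {u : (Fin m ⊕ Fin n) →₀ ℕ} :
    monomial u (1 : k) ∈ jA k m n O ↔ ∃ v ∈ O, genExp v ≤ u := by
  simp [jA_eq_span, mem_ideal_span_monomial_image]

theorem monomial_genExp_mem_jA {v : Fin m × Fin n} (hv : v ∈ O) :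
    monomial (genExp v) (1 : k) ∈ jA k m n O :=
  monomial_mem_jA_iff.2 ⟨v, hv, le_rfl⟩

theorem jA.linearMap_ext {M : Type*} [AddCommMonoid M] [Module S M]
    {f g : jA k m n O →ₗ[S] M}
    (h : ∀ v (hv : v ∈ O), f ⟨_, monomial_genExp_mem_jA hv⟩ = g ⟨_, monomial_genExp_mem_jA hv⟩) :
    f = g := by
  refine LinearMap.ext_on (Submodule.span_span_coe_preimage (R := S)) ?_
  rintro ⟨x, hx⟩ ⟨v, hv, rfl⟩
  convert h v hv using 3 <;> simp [genExp, X, monomial_mul]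

noncomputable def quadDegree (p q : Fin m × Fin n) : (Fin m ⊕ Fin n) →₀ ℤ :=
  Finsupp.single (Sum.inl q.1) 1 - Finsupp.single (Sum.inl p.1) 1 +
    Finsupp.single (Sum.inr q.2) 1 - Finsupp.single (Sum.inr p.2) 1

theorem quadDegree_apply (t : Fin m ⊕ Fin n) :
    quadDegree p q t = (genExp q t : ℤ) - genExp p t := by
  rcases t with x | y <;> simp [quadDegree, Finsupp.single_apply]

namespace FineHomog

variable {φ ψ : jA k m n O →ₗ[MvPolynomial (Fin m ⊕ Fin n) k]
  MvPolynomial (Fin m ⊕ Fin n) k ⧸ jA k m n O}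

theorem genExp_le (hφ : FineHomog O (quadDegree p q) φ) (h₁ : p.1 ≠ q.1) (h₂ : p.2 ≠ q.2)
    {u : (Fin m ⊕ Fin n) →₀ ℕ} (hu : monomial u (1 : k) ∈ J)
    (hne : φ ⟨monomial u 1, hu⟩ ≠ 0) : genExp p ≤ u := by
  obtain ⟨-, v, -, hv, -⟩ := (hφ u hu).resolve_left hne
  have h1 := hv (Sum.inl p.1)
  have h2 := hv (Sum.inr p.2)
  simp [quadDegree_apply, h₁.symm, h₂.symm] at h1 h2
  exact genExp_le_iff.2 ⟨by omega, by omega⟩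

theorem apply_genExp_of_ne (hφ : FineHomog O (quadDegree p q) φ) (h₁ : p.1 ≠ q.1)
    (h₂ : p.2 ≠ q.2) {v : Fin m × Fin n} (hv : v ∈ O) (hvp : v ≠ p) :
    φ ⟨_, monomial_genExp_mem_jA hv⟩ = 0 := by
  by_contra hne
  exact hvp (genExp_le_genExp_iff.1 (hφ.genExp_le h₁ h₂ _ hne)).symm

theorem exists_apply_genExp (hφ : FineHomog O (quadDegree p q) φ) (hp : p ∈ O) :
    ∃ c : k, φ ⟨_, monomial_genExp_mem_jA hp⟩ =
      c • Ideal.Quotient.mk J (monomial (genExp q) 1) := by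
  rcases hφ _ (monomial_genExp_mem_jA hp) with h | ⟨c, v, -, hv, h⟩
  · exact ⟨0, by rw [h, zero_smul]⟩
  · obtain rfl : v = genExp q := Finsupp.ext fun t => by
      have := hv t
      rw [quadDegree_apply] at this
      omega
    exact ⟨c, h⟩

theorem eq_zero_of_apply_genExp (hφ : FineHomog O (quadDegree p q) φ) (h₁ : p.1 ≠ q.1)
    (h₂ : p.2 ≠ q.2) (h : ∀ hp : p ∈ O, φ ⟨_, monomial_genExp_mem_jA hp⟩ = 0) : φ = 0 :=
  jA.linearMap_ext fun v hv => by
    rcases eq_or_ne v p with rfl | hvp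
    · exact h hv
    · exact hφ.apply_genExp_of_ne h₁ h₂ hv hvp

theorem exists_apply_genExp_ne_zero (hφ : FineHomog O (quadDegree p q) φ) (h₁ : p.1 ≠ q.1)
    (h₂ : p.2 ≠ q.2) (h0 : φ ≠ 0) :
    ∃ hp : p ∈ O, ∃ c : k, c ≠ 0 ∧ φ ⟨_, monomial_genExp_mem_jA hp⟩ =
      c • Ideal.Quotient.mk J (monomial (genExp q) 1) := by
  obtain ⟨hp, hne⟩ : ∃ hp : p ∈ O, φ ⟨_, monomial_genExp_mem_jA hp⟩ ≠ 0 := by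
    by_contra! h
    exact h0 (hφ.eq_zero_of_apply_genExp h₁ h₂ h)
  obtain ⟨c, hc⟩ := hφ.exists_apply_genExp hp
  exact ⟨hp, c, fun h => hne (by rw [hc, h, zero_smul]), hc⟩

theorem exists_eq_smul (hφ : FineHomog O (quadDegree p q) φ)
    (hψ : FineHomog O (quadDegree p q) ψ) (h₁ : p.1 ≠ q.1) (h₂ : p.2 ≠ q.2) (h0 : φ ≠ 0) :
    ∃ c : k, ∀ x, ψ x = c • φ x := by
  obtain ⟨hp, c, hc, hφp⟩ := hφ.exists_apply_genExp_ne_zero h₁ h₂ h0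
  obtain ⟨c', hψp⟩ := hψ.exists_apply_genExp hp
  suffices ψ = (c' / c) • φ from ⟨c' / c, LinearMap.ext_iff.1 this⟩
  refine jA.linearMap_ext fun v hv => ?_
  rcases eq_or_ne v p with rfl | hvp
  · rw [LinearMap.smul_apply, hφp, hψp, smul_smul, div_mul_cancel₀ _ hc]
  · rw [LinearMap.smul_apply, hφ.apply_genExp_of_ne h₁ h₂ hv hvp,
      hψ.apply_genExp_of_ne h₁ h₂ hv hvp, smul_zero]

theorem monomial_add_mem_of_syzygy (hφ : FineHomog O (quadDegree p q) φ) (h₁ : p.1 ≠ q.1)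
    (h₂ : p.2 ≠ q.2) (hp : p ∈ O) {c : k} (hc : c ≠ 0)
    (hφp : φ ⟨_, monomial_genExp_mem_jA hp⟩ = c • Ideal.Quotient.mk J (monomial (genExp q) 1))
    {v : Fin m × Fin n} (hv : v ∈ O) (hvp : v ≠ p) {μ ν : (Fin m ⊕ Fin n) →₀ ℕ}
    (hsyz : μ + genExp p = ν + genExp v) : monomial (μ + genExp q) (1 : k) ∈ J := by
  have key : monomial μ (1 : k) • φ ⟨_, monomial_genExp_mem_jA hp⟩ =
      monomial ν (1 : k) • φ ⟨_, monomial_genExp_mem_jA hv⟩ := by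
    rw [← map_smul, ← map_smul]
    congr 1
    ext1
    simp only [SetLike.val_smul, smul_eq_mul, monomial_mul, mul_one, hsyz]
  rw [hφp, hφ.apply_genExp_of_ne h₁ h₂ hv hvp, smul_zero, smul_comm, smul_eq_zero] at key
  rw [← Ideal.Quotient.eq_zero_iff_mem, ← mul_one (1 : k), ← monomial_mul]
  exact key.resolve_left hc

theorem isTangentPair (hφ : FineHomog O (quadDegree p q) φ) (h₁ : p.1 ≠ q.1)
    (h₂ : p.2 ≠ q.2) (h0 : φ ≠ 0) : IsTangentPair O p q := by
  obtain ⟨hp, c, hc, hφp⟩ := hφ.exists_apply_genExp_ne_zero h₁ h₂ h0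
  have hq : q ∉ O := fun hq => h0 <| hφ.eq_zero_of_apply_genExp h₁ h₂ fun _ => by
    rw [hφp, Ideal.Quotient.eq_zero_iff_mem.2 (monomial_genExp_mem_jA hq), smul_zero]
  refine ⟨hp, hq, fun y hy hyp => ?_, fun x hx hxp => ?_⟩
  · obtain ⟨w, hw, hle⟩ := monomial_mem_jA_iff.1 <|
      hφ.monomial_add_mem_of_syzygy h₁ h₂ hp hc hφp hy (by simp [Prod.ext_iff, hyp])
        (μ := Finsupp.single (Sum.inr y) 1) (ν := Finsupp.single (Sum.inr p.2) 1)
        (by simp only [genExp]; abel)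
    rcases eq_or_eq_of_genExp_le_single_inr_add hle with rfl | rfl
    · exact absurd hw hq
    · exact hw
  · obtain ⟨w, hw, hle⟩ := monomial_mem_jA_iff.1 <|
      hφ.monomial_add_mem_of_syzygy h₁ h₂ hp hc hφp hx (by simp [Prod.ext_iff, hxp])
        (μ := Finsupp.single (Sum.inl x) 1) (ν := Finsupp.single (Sum.inl p.1) 1)
        (by simp only [genExp]; abel)
    rcases eq_or_eq_of_genExp_le_single_inl_add hle with rfl | rfl
    · exact absurd hw hq
    · exact hw

end FineHomog

theorem genExp_shiftPoint_le {v : Fin m × Fin n} {u : (Fin m ⊕ Fin n) →₀ ℕ}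
    (h : genExp v ≤ u) : genExp (shiftPoint p q v) ≤ u - genExp p + genExp q := by
  obtain ⟨h1, h2⟩ := genExp_le_iff.1 h
  refine genExp_le_iff.2 ⟨?_, ?_⟩ <;>
    simp only [shiftPoint, Finsupp.add_apply, Finsupp.tsub_apply, genExp_inl, genExp_inr] <;>
    split_ifs <;> omega

variable (k O p q) in
/-- Only `k`-linear on `S`; its restriction to `J` is `S`-linear when `IsTangentPair O p q`
holds (`shiftLinear_monomial_mul_genExp`). -/
noncomputable def shiftLinear : S →ₗ[k] S ⧸ J :=
  (basisMonomials (Fin m ⊕ Fin n) k).constr k fun u =>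
    if genExp p ≤ u then Ideal.Quotient.mk J (monomial (u - genExp p + genExp q) 1) else 0

theorem shiftLinear_monomial (u : (Fin m ⊕ Fin n) →₀ ℕ) :
    shiftLinear k O p q (monomial u 1) =
      if genExp p ≤ u then Ideal.Quotient.mk J (monomial (u - genExp p + genExp q) 1) else 0 :=
  (basisMonomials (Fin m ⊕ Fin n) k).constr_basis k _ u

theorem shiftLinear_monomial_mul_genExp (ht : IsTangentPair O p q) {v : Fin m × Fin n}
    (hv : v ∈ O) (μ : (Fin m ⊕ Fin n) →₀ ℕ) :
    shiftLinear k O p q (monomial μ 1 * monomial (genExp v) 1) =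
      monomial μ (1 : k) • shiftLinear k O p q (monomial (genExp v) 1) := by
  rw [monomial_mul, one_mul, shiftLinear_monomial, shiftLinear_monomial]
  rcases eq_or_ne v p with rfl | hvp
  · rw [if_pos le_add_self, if_pos le_rfl, add_tsub_cancel_right, tsub_self, zero_add,
      ← Ideal.Quotient.mk_eq_mk, ← Ideal.Quotient.mk_eq_mk, ← Submodule.Quotient.mk_smul,
      smul_eq_mul, monomial_mul, one_mul]
  · rw [if_neg (genExp_le_genExp_iff.not.2 hvp.symm), smul_zero]
    split_ifs
    · rw [Ideal.Quotient.eq_zero_iff_mem, monomial_mem_jA_iff]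
      exact ⟨_, ht.shiftPoint_mem hv hvp, genExp_shiftPoint_le le_add_self⟩
    · rfl

variable (k) in
noncomputable def tangentHom (ht : IsTangentPair O p q) : J →ₗ[S] S ⧸ J where
  toFun f := shiftLinear k O p q f
  map_add' f g := by rw [Submodule.coe_add, map_add]
  map_smul' r f := by
    refine map_mul_of_mem_span _ ?_ (jA_eq_span.le f.2) r
    rintro _ ⟨_, ⟨v, hv, rfl⟩, rfl⟩ μ
    exact shiftLinear_monomial_mul_genExp ht hv μ

theorem tangentHom_apply (ht : IsTangentPair O p q) (f : J) :
    tangentHom k ht f = shiftLinear k O p q f :=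
  rfl

theorem fineHomog_tangentHom (ht : IsTangentPair O p q) :
    FineHomog O (quadDegree p q) (tangentHom k ht) := by
  intro u hu
  rw [tangentHom_apply, shiftLinear_monomial]
  split_ifs with hle
  · refine Or.inr ⟨1, u - genExp p + genExp q, one_ne_zero, fun t => ?_, (one_smul _ _).symm⟩
    rw [quadDegree_apply, Finsupp.add_apply, Finsupp.tsub_apply]
    have := hle t
    omega
  · exact Or.inl rfl

theorem tangentHom_ne_zero (ht : IsTangentPair O p q) : tangentHom k ht ≠ 0 := fun h => by
  have := LinearMap.congr_fun h ⟨_, monomial_genExp_mem_jA ht.mem⟩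
  rw [tangentHom_apply, shiftLinear_monomial, if_pos le_rfl, tsub_self, zero_add,
    LinearMap.zero_apply, Ideal.Quotient.eq_zero_iff_mem, monomial_mem_jA_iff] at this
  obtain ⟨v, hv, hle⟩ := this
  exact ht.notMem (genExp_le_genExp_iff.1 hle ▸ hv)

theorem exists_fineHomog_ne_zero_iff (h₁ : p.1 ≠ q.1) (h₂ : p.2 ≠ q.2) :
    (∃ φ : J →ₗ[S] S ⧸ J, FineHomog O (quadDegree p q) φ ∧ φ ≠ 0) ↔ IsTangentPair O p q :=
  ⟨fun ⟨_, hφ, h0⟩ => hφ.isTangentPair h₁ h₂ h0,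
    fun ht => ⟨tangentHom k ht, fineHomog_tangentHom ht, tangentHom_ne_zero ht⟩⟩

end MonomialIdeal

section LowerSet

variable {α β : Type*} [LinearOrder α] [LinearOrder β] {O : Set (α × β)} {i j : α} {k h : β}

namespace IsTangentPair

theorem lt_fst (hO : IsLowerSet O) (ht : IsTangentPair O (i, k) (j, h)) (hij : i ≠ j) :
    i < j := by
  by_contra! hji
  exact ht.notMem (ht.col j (hO (Prod.mk_le_mk.2 ⟨hji, le_rfl⟩) ht.mem) hij.symm)

theorem lt_snd (hO : IsLowerSet O) (ht : IsTangentPair O (i, k) (j, h)) (hkh : k ≠ h) :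
    k < h := by
  by_contra! hhk
  exact ht.notMem (ht.row h (hO (Prod.mk_le_mk.2 ⟨le_rfl, hhk⟩) ht.mem) hkh.symm)

theorem notMem_of_lt_fst (hO : IsLowerSet O) (ht : IsTangentPair O (i, k) (j, h)) (hkh : k ≠ h)
    {x : α} (hx : i < x) : (x, k) ∉ O := fun hxk =>
  ht.notMem <| ht.row h (hO (Prod.mk_le_mk.2 ⟨hx.le, le_rfl⟩) (ht.col x hxk hx.ne')) hkh.symm

theorem notMem_of_lt_snd (hO : IsLowerSet O) (ht : IsTangentPair O (i, k) (j, h)) (hij : i ≠ j)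
    {y : β} (hy : k < y) : (i, y) ∉ O := fun hiy =>
  ht.notMem <| ht.col j (hO (Prod.mk_le_mk.2 ⟨le_rfl, hy.le⟩) (ht.row y hiy hy.ne')) hij.symm

end IsTangentPair

end LowerSet

section Staircase

/-- `(x, y) ∈ staircase s a b` stands for the generator `x_{x+1} y_{y+1}` of `J_A`, so the
corner `(a_ℓ, b_ℓ)` of the antichain is the point `(a ℓ - 1, b ℓ - 1)`. -/
def staircase (s : ℕ) (a b : ℕ → ℕ) : Set (ℕ × ℕ) :=
  {v | ∃ ℓ, 1 ≤ ℓ ∧ ℓ ≤ s ∧ v.1 < a ℓ ∧ v.2 < b ℓ}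

variable {s m n : ℕ} {a b : ℕ → ℕ} {i j k h x y : ℕ}

@[simp]
theorem mem_staircase : (x, y) ∈ staircase s a b ↔ ∃ ℓ, 1 ≤ ℓ ∧ ℓ ≤ s ∧ x < a ℓ ∧ y < b ℓ :=
  Iff.rfl

theorem isLowerSet_staircase : IsLowerSet (staircase s a b) := by
  rintro ⟨x, y⟩ ⟨x', y'⟩ hle hxy
  obtain ⟨hx', hy'⟩ := Prod.mk_le_mk.1 hle
  obtain ⟨ℓ, h1, h2, hx, hy⟩ := mem_staircase.1 hxy
  exact ⟨ℓ, h1, h2, by omega, by omega⟩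

theorem staircase_subset (ha : ∀ ℓ, 1 ≤ ℓ → ℓ ≤ s → a ℓ ≤ m)
    (hb : ∀ ℓ, 1 ≤ ℓ → ℓ ≤ s → b ℓ ≤ n) : staircase s a b ⊆ Iio m ×ˢ Iio n := by
  rintro ⟨x, y⟩ hxy
  obtain ⟨ℓ, h1, h2, hx, hy⟩ := mem_staircase.1 hxy
  exact ⟨(hx.trans_le (ha ℓ h1 h2) :), (hy.trans_le (hb ℓ h1 h2) :)⟩

namespace IsTangentPair

theorem exists_corner (ht : IsTangentPair (staircase s a b) (i, k) (j, h)) (hij : i ≠ j)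
    (hkh : k ≠ h) : ∃ ℓ, 1 ≤ ℓ ∧ ℓ ≤ s ∧ a ℓ = i + 1 ∧ b ℓ = k + 1 := by
  obtain ⟨ℓ, h1, h2, hi, hk⟩ := mem_staircase.1 ht.mem
  refine ⟨ℓ, h1, h2, ?_, ?_⟩
  · by_contra hne
    exact ht.notMem_of_lt_fst isLowerSet_staircase hkh (lt_add_one i)
      (mem_staircase.2 ⟨ℓ, h1, h2, by omega, hk⟩)
  · by_contra hne
    exact ht.notMem_of_lt_snd isLowerSet_staircase hij (lt_add_one k)
      (mem_staircase.2 ⟨ℓ, h1, h2, hi, by omega⟩)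

theorem staircase_pred (ha0 : a 0 = 0) (hb0 : b 0 = n)
    (hapos : ∀ ℓ, 1 ≤ ℓ → ℓ ≤ s → 1 ≤ a ℓ) (hamono : StrictMonoOn a (Icc 1 s))
    (hbanti : StrictAntiOn b (Icc 1 s)) (ht : IsTangentPair (staircase s a b) (i, k) (j, h))
    (hkh : k < h) (hn : h < n) {ℓ : ℕ} (h1 : 1 ≤ ℓ) (h2 : ℓ ≤ s) (haℓ : a ℓ = i + 1)
    (hbℓ : b ℓ = k + 1) : a (ℓ - 1) = i ∧ h < b (ℓ - 1) := by
  rcases Nat.eq_zero_or_pos i with rfl | hi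
  · obtain rfl : ℓ = 1 := by
      by_contra hℓ
      have := hamono ⟨(by omega : 1 ≤ ℓ - 1), by omega⟩ ⟨h1, h2⟩ (by omega)
      have := hapos (ℓ - 1) (by omega) (by omega)
      omega
    exact ⟨ha0, hb0 ▸ hn⟩
  · obtain ⟨ℓ', h1', h2', hi', hh'⟩ := mem_staircase.1 <|
      ht.col (i - 1) (mem_staircase.2 ⟨ℓ, h1, h2, by omega, by omega⟩) (by dsimp only; omega)
    have hℓ' : ℓ' < ℓ := (hbanti.lt_iff_gt ⟨h1, h2⟩ ⟨h1', h2'⟩).1 (by omega)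
    have hle : a ℓ' ≤ a (ℓ - 1) :=
      (hamono.le_iff_le ⟨h1', h2'⟩ ⟨(by omega : 1 ≤ ℓ - 1), by omega⟩).2 (by omega)
    have hlt : a (ℓ - 1) < a ℓ := hamono ⟨(by omega : 1 ≤ ℓ - 1), by omega⟩ ⟨h1, h2⟩ (by omega)
    obtain rfl : ℓ' = ℓ - 1 := by
      by_contra hne
      have := hamono ⟨h1', h2'⟩ ⟨(by omega : 1 ≤ ℓ - 1), by omega⟩ (by omega)
      omega
    exact ⟨by omega, hh'⟩

theorem staircase_succ (haS : a (s + 1) = m) (hbS : b (s + 1) = 0)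
    (hbpos : ∀ ℓ, 1 ≤ ℓ → ℓ ≤ s → 1 ≤ b ℓ) (hamono : StrictMonoOn a (Icc 1 s))
    (hbanti : StrictAntiOn b (Icc 1 s)) (ht : IsTangentPair (staircase s a b) (i, k) (j, h))
    (hij : i < j) (hm : j < m) {ℓ : ℕ} (h1 : 1 ≤ ℓ) (h2 : ℓ ≤ s) (haℓ : a ℓ = i + 1)
    (hbℓ : b ℓ = k + 1) : b (ℓ + 1) = k ∧ j < a (ℓ + 1) := by
  rcases Nat.eq_zero_or_pos k with rfl | hk
  · obtain rfl : ℓ = s := by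
      by_contra hℓ
      have := hbanti ⟨h1, h2⟩ ⟨(by omega : 1 ≤ ℓ + 1), by omega⟩ (by omega)
      have := hbpos (ℓ + 1) (by omega) (by omega)
      omega
    exact ⟨hbS, haS ▸ hm⟩
  · obtain ⟨ℓ', h1', h2', hj', hk'⟩ := mem_staircase.1 <|
      ht.row (k - 1) (mem_staircase.2 ⟨ℓ, h1, h2, by omega, by omega⟩) (by dsimp only; omega)
    have hℓ' : ℓ < ℓ' := (hamono.lt_iff_lt ⟨h1, h2⟩ ⟨h1', h2'⟩).1 (by omega)
    have hle : b ℓ' ≤ b (ℓ + 1) :=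
      (hbanti.le_iff_ge ⟨h1', h2'⟩ ⟨(by omega : 1 ≤ ℓ + 1), by omega⟩).2 (by omega)
    have hlt : b (ℓ + 1) < b ℓ := hbanti ⟨h1, h2⟩ ⟨(by omega : 1 ≤ ℓ + 1), by omega⟩ (by omega)
    obtain rfl : ℓ' = ℓ + 1 := by
      by_contra hne
      have := hbanti ⟨(by omega : 1 ≤ ℓ + 1), by omega⟩ ⟨h1', h2'⟩ (by omega)
      omega
    exact ⟨by omega, hj'⟩

end IsTangentPair

theorem isTangentPair_staircase (ha0 : a 0 = 0) (hbS : b (s + 1) = 0)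
    (hamono : StrictMonoOn a (Icc 1 s)) (hbanti : StrictAntiOn b (Icc 1 s)) {ℓ : ℕ}
    (h1 : 1 ≤ ℓ) (h2 : ℓ ≤ s) (haℓ : a ℓ = i + 1) (hbℓ : b ℓ = k + 1)
    (hapred : a (ℓ - 1) = i) (hbsucc : b (ℓ + 1) = k) (hij : i < j) (hj : j < a (ℓ + 1))
    (hkh : k < h) (hh : h < b (ℓ - 1)) : IsTangentPair (staircase s a b) (i, k) (j, h) := by
  refine ⟨mem_staircase.2 ⟨ℓ, h1, h2, by omega, by omega⟩, fun hjh => ?_, fun y hy hyk => ?_,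
    fun x hx hxi => ?_⟩
  · obtain ⟨ℓ', h1', h2', hj', hh'⟩ := mem_staircase.1 hjh
    have hℓ' : ℓ < ℓ' := (hamono.lt_iff_lt ⟨h1, h2⟩ ⟨h1', h2'⟩).1 (by omega)
    have := (hbanti.le_iff_ge ⟨h1', h2'⟩ ⟨(by omega : 1 ≤ ℓ + 1), by omega⟩).2 (by omega)
    omega
  · obtain ⟨ℓ', h1', h2', hi', hy⟩ := mem_staircase.1 hy
    dsimp only at hyk ⊢
    have hℓ' : ℓ ≤ ℓ' := by
      by_contra! hℓ'
      have := (hamono.le_iff_le ⟨h1', h2'⟩ ⟨(by omega : 1 ≤ ℓ - 1), by omega⟩).2 (by omega)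
      omega
    have := (hbanti.le_iff_ge ⟨h1', h2'⟩ ⟨h1, h2⟩).2 hℓ'
    have hs : ℓ + 1 ≤ s := by
      by_contra hs
      obtain rfl : ℓ = s := by omega
      omega
    exact mem_staircase.2 ⟨ℓ + 1, by omega, hs, hj, by omega⟩
  · obtain ⟨ℓ', h1', h2', hx, hk'⟩ := mem_staircase.1 hx
    dsimp only at hxi ⊢
    have hℓ' : ℓ' ≤ ℓ := by
      by_contra! hℓ'
      have := (hbanti.le_iff_ge ⟨h1', h2'⟩ ⟨(by omega : 1 ≤ ℓ + 1), by omega⟩).2 (by omega)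
      omega
    have := (hamono.le_iff_le ⟨h1', h2'⟩ ⟨h1, h2⟩).2 hℓ'
    have hs : 1 ≤ ℓ - 1 := by
      by_contra hs
      obtain rfl : ℓ = 1 := by omega
      rw [Nat.sub_self, ha0] at hapred
      omega
    exact mem_staircase.2 ⟨ℓ - 1, hs, by omega, by omega, hh⟩

theorem isTangentPair_staircase_iff (ha0 : a 0 = 0) (haS : a (s + 1) = m) (hb0 : b 0 = n)
    (hbS : b (s + 1) = 0) (hapos : ∀ ℓ, 1 ≤ ℓ → ℓ ≤ s → 1 ≤ a ℓ)
    (hbpos : ∀ ℓ, 1 ≤ ℓ → ℓ ≤ s → 1 ≤ b ℓ) (hamono : StrictMonoOn a (Icc 1 s))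
    (hbanti : StrictAntiOn b (Icc 1 s)) (hm : j < m) (hn : h < n) (hij : i ≠ j) (hkh : k ≠ h) :
    IsTangentPair (staircase s a b) (i, k) (j, h) ↔
      ∃ ℓ, 1 ≤ ℓ ∧ ℓ ≤ s ∧ i + 1 = a ℓ ∧ k + 1 = b ℓ ∧
        a (ℓ - 1) = a ℓ - 1 ∧ b (ℓ + 1) = b ℓ - 1 ∧
        a ℓ + 1 ≤ j + 1 ∧ j + 1 ≤ a (ℓ + 1) ∧ b ℓ + 1 ≤ h + 1 ∧ h + 1 ≤ b (ℓ - 1) := by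
  constructor
  · intro ht
    have hij' := ht.lt_fst isLowerSet_staircase hij
    have hkh' := ht.lt_snd isLowerSet_staircase hkh
    obtain ⟨ℓ, h1, h2, haℓ, hbℓ⟩ := ht.exists_corner hij hkh
    obtain ⟨hapred, hh⟩ := ht.staircase_pred ha0 hb0 hapos hamono hbanti hkh' hn h1 h2 haℓ hbℓ
    obtain ⟨hbsucc, hj⟩ := ht.staircase_succ haS hbS hbpos hamono hbanti hij' hm h1 h2 haℓ hbℓ
    exact ⟨ℓ, h1, h2, by omega, by omega, by omega, by omega, by omega, hj, by omega, hh⟩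
  · rintro ⟨ℓ, h1, h2, haℓ, hbℓ, hapred, hbsucc, hij', hj, hkh', hh⟩
    exact isTangentPair_staircase ha0 hbS hamono hbanti h1 h2 haℓ.symm hbℓ.symm (by omega)
      (by omega) (by omega) hj (by omega) hh

end Staircase

/-- Description of quadratic tangents: for an antichain `A = {(a_1,b_1),…,(a_s,b_s)}` of
`[m] × [n]` (with conventions `a_0 = 0`, `a_{s+1} = m`, `b_0 = n`, `b_{s+1} = 0`), the fine
multidegree component of `T_A = [Hom_S(J_A, S/J_A)]_{(0,0)}` in degree
`d = e_j − e_i + f_h − f_k` (`i ≠ j`, `h ≠ k`) is nonzero (and then one-dimensional) if and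
only if there is `1 ≤ ℓ ≤ s` with `(i,k) = (a_ℓ, b_ℓ)`, `a_{ℓ−1} = a_ℓ − 1`,
`b_{ℓ+1} = b_ℓ − 1`, `a_ℓ + 1 ≤ j ≤ a_{ℓ+1}` and `b_ℓ + 1 ≤ h ≤ b_{ℓ−1}`.
The variable `x_i` for `i : Fin m` has 1-indexed label `(i : ℕ) + 1`. -/
theorem stmt11 {k : Type*} [Field k] (m n s : ℕ) (a b : ℕ → ℕ)
    (ha0 : a 0 = 0) (haS : a (s + 1) = m) (hb0 : b 0 = n) (hbS : b (s + 1) = 0)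
    (ha : ∀ i, 1 ≤ i → i ≤ s → 1 ≤ a i ∧ a i ≤ m)
    (hb : ∀ i, 1 ≤ i → i ≤ s → 1 ≤ b i ∧ b i ≤ n)
    (hamono : ∀ i j, 1 ≤ i → i < j → j ≤ s → a i < a j)
    (hbanti : ∀ i j, 1 ≤ i → i < j → j ≤ s → b j < b i)
    (i j : Fin m) (hh kk : Fin n) (hij : i ≠ j) (hhk : hh ≠ kk) :
    let O : Set (Fin m × Fin n) :=
      {v | ∃ ℓ, 1 ≤ ℓ ∧ ℓ ≤ s ∧ (v.1 : ℕ) + 1 ≤ a ℓ ∧ (v.2 : ℕ) + 1 ≤ b ℓ}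
    let d : (Fin m ⊕ Fin n) →₀ ℤ :=
      Finsupp.single (Sum.inl j) 1 - Finsupp.single (Sum.inl i) 1 +
        Finsupp.single (Sum.inr hh) 1 - Finsupp.single (Sum.inr kk) 1
    ((∃ φ : ↥(jA k m n O) →ₗ[MvPolynomial (Fin m ⊕ Fin n) k]
        (MvPolynomial (Fin m ⊕ Fin n) k ⧸ jA k m n O),
        FineHomog O d φ ∧ φ ≠ 0) ↔
      (∃ ℓ, 1 ≤ ℓ ∧ ℓ ≤ s ∧
        (i : ℕ) + 1 = a ℓ ∧ (kk : ℕ) + 1 = b ℓ ∧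
        a (ℓ - 1) = a ℓ - 1 ∧ b (ℓ + 1) = b ℓ - 1 ∧
        a ℓ + 1 ≤ (j : ℕ) + 1 ∧ (j : ℕ) + 1 ≤ a (ℓ + 1) ∧
        b ℓ + 1 ≤ (hh : ℕ) + 1 ∧ (hh : ℕ) + 1 ≤ b (ℓ - 1))) ∧
    (∀ φ₁ φ₂ : ↥(jA k m n O) →ₗ[MvPolynomial (Fin m ⊕ Fin n) k]
        (MvPolynomial (Fin m ⊕ Fin n) k ⧸ jA k m n O),
      FineHomog O d φ₁ → FineHomog O d φ₂ → φ₁ ≠ 0 →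
      ∃ c : k, ∀ x, φ₂ x = c • φ₁ x) := by
  intro O d
  have hO : O = Prod.map Fin.val Fin.val ⁻¹' staircase s a b := rfl
  have hd : d = quadDegree (i, kk) (j, hh) := rfl
  clear_value O d
  subst hO hd
  have hsub : staircase s a b ⊆ range (Fin.val (n := m)) ×ˢ range (Fin.val (n := n)) := by
    rw [Fin.range_val, Fin.range_val]
    exact staircase_subset (fun ℓ h1 h2 => (ha ℓ h1 h2).2) fun ℓ h1 h2 => (hb ℓ h1 h2).2
  refine ⟨?_, fun φ₁ φ₂ hφ₁ hφ₂ h0 => hφ₁.exists_eq_smul hφ₂ hij hhk.symm h0⟩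
  exact (exists_fineHomog_ne_zero_iff hij hhk.symm).trans <|
    (isTangentPair_preimage_iff Fin.val_injective Fin.val_injective hsub).trans <|
    isTangentPair_staircase_iff ha0 haS hb0 hbS (fun ℓ h1 h2 => (ha ℓ h1 h2).1)
      (fun ℓ h1 h2 => (hb ℓ h1 h2).1) (fun x hx y hy hxy => hamono x y hx.1 hxy hy.2)
      (fun x hx y hy hxy => hbanti x y hx.1 hxy hy.2) j.isLt hh.isLt
      (Fin.val_injective.ne hij) (Fin.val_injective.ne hhk.symm)
end

section
/- Every nonzero fine-multigraded element φ of T_A = [Hom_S(J_A, S/J_A)]_{(0,0)} has multidegree of the form e_j − e_i, f_h − f_k, or e_j − e_i + f_h − f_k (with i ≠ j, h ≠ k); that is, every tangent vector is linear or quadratic. -/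
open MvPolynomial

private lemma aux_sum_one {α : Type*} [Fintype α] [DecidableEq α] (f : α → ℕ)
    (h : ∑ i, f i = 1) : ∃ a, f a = 1 ∧ ∀ i, i ≠ a → f i = 0 := by
  obtain ⟨a, ha⟩ : ∃ a, f a ≠ 0 := by
    by_contra hc; push_neg at hc; simp [hc] at h
  have h1 : f a ≤ 1 := h ▸ Finset.single_le_sum (fun i _ => Nat.zero_le _) (Finset.mem_univ a)
  have hfa : f a = 1 := le_antisymm h1 (Nat.one_le_iff_ne_zero.2 ha)
  refine ⟨a, hfa, fun i hi => ?_⟩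
  have h2 := Finset.add_sum_erase Finset.univ f (Finset.mem_univ a)
  have h0 : ∑ j ∈ Finset.univ.erase a, f j = 0 := by omega
  exact (Finset.sum_eq_zero_iff).1 h0 i (Finset.mem_erase.2 ⟨hi, Finset.mem_univ i⟩)

/-- Every nonzero fine-multigraded element `φ` of `T_A = [Hom_S(J_A, S/J_A)]_{(0,0)}`
(bidegree `(0,0)` says that the `x`-entries and the `y`-entries of the multidegree `d` each
sum to zero) has multidegree of the form `e_j − e_i`, `f_h − f_k`, or
`e_j − e_i + f_h − f_k` (with `i ≠ j`, `h ≠ k`): every tangent vector is linear or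
quadratic. -/
theorem stmt12 {k : Type*} [Field k] {m n : ℕ}
    (A : Set (Fin m × Fin n)) (hA : IsAntichain (· ≤ ·) A)
    (d : (Fin m ⊕ Fin n) →₀ ℤ)
    (hdx : (∑ i : Fin m, d (Sum.inl i)) = 0)
    (hdy : (∑ p : Fin n, d (Sum.inr p)) = 0)
    (φ : ↥(jA k m n {v | ∃ w ∈ A, v ≤ w}) →ₗ[MvPolynomial (Fin m ⊕ Fin n) k]
      (MvPolynomial (Fin m ⊕ Fin n) k ⧸ jA k m n {v | ∃ w ∈ A, v ≤ w}))
    (hhom : FineHomog {v | ∃ w ∈ A, v ≤ w} d φ)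
    (hne : φ ≠ 0) :
    (∃ i j : Fin m, i ≠ j ∧
      d = Finsupp.single (Sum.inl j) 1 - Finsupp.single (Sum.inl i) 1) ∨
    (∃ p q : Fin n, p ≠ q ∧
      d = Finsupp.single (Sum.inr p) 1 - Finsupp.single (Sum.inr q) 1) ∨
    (∃ (i j : Fin m) (p q : Fin n), i ≠ j ∧ p ≠ q ∧
      d = Finsupp.single (Sum.inl j) 1 - Finsupp.single (Sum.inl i) 1 +
        Finsupp.single (Sum.inr p) 1 - Finsupp.single (Sum.inr q) 1) := by
  classical
  -- Step 1: there is a generator on which φ is nonzero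
  have key : ∃ (a : Fin m) (b : Fin n)
      (h : (monomial (Finsupp.single (Sum.inl a) 1 + Finsupp.single (Sum.inr b) 1) (1:k))
        ∈ jA k m n {v | ∃ w ∈ A, v ≤ w}),
      φ ⟨_, h⟩ ≠ 0 := by
    by_contra hk
    push_neg at hk
    apply hne
    ext z
    obtain ⟨x, hx⟩ := z
    simp only [LinearMap.zero_apply]
    induction hx using Submodule.span_induction with
    | mem x hmem =>
      obtain ⟨⟨a, b⟩, hab, rfl⟩ := hmem
      have hx2 : X (Sum.inl a) * X (Sum.inr b)
          = monomial (Finsupp.single (Sum.inl a) 1 + Finsupp.single (Sum.inr b) 1) (1:k) := by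
        rw [X, X, monomial_mul, one_mul]
      have h' : (monomial (Finsupp.single (Sum.inl a) 1 + Finsupp.single (Sum.inr b) 1) (1:k))
          ∈ jA k m n {v | ∃ w ∈ A, v ≤ w} := by
        rw [← hx2]; exact Ideal.subset_span ⟨(a, b), hab, rfl⟩
      simp only [hx2]
      exact hk a b h'
    | zero =>
      show φ (0 : jA k m n {v | ∃ w ∈ A, v ≤ w}) = 0
      exact map_zero φ
    | add x y hx hy ihx ihy =>
      show φ ((⟨x, hx⟩ : jA k m n {v | ∃ w ∈ A, v ≤ w}) + ⟨y, hy⟩) = 0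
      rw [map_add, ihx, ihy, add_zero]
    | smul r x hx ih =>
      show φ (r • (⟨x, hx⟩ : jA k m n {v | ∃ w ∈ A, v ≤ w})) = 0
      rw [map_smul, ih, smul_zero]
  obtain ⟨a, b, hmem, hφ⟩ := key
  rcases hhom (Finsupp.single (Sum.inl a) 1 + Finsupp.single (Sum.inr b) 1) hmem with
    h0 | ⟨c, v, hc, hv, heq⟩
  · exact absurd h0 hφ
  have hux : ∀ i : Fin m,
      (((Finsupp.single (Sum.inl a) 1 + Finsupp.single (Sum.inr b) 1 :
        (Fin m ⊕ Fin n) →₀ ℕ) (Sum.inl i)) : ℤ) = if a = i then 1 else 0 := by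
    intro i
    simp [Finsupp.single_apply]
  have huy : ∀ p : Fin n,
      (((Finsupp.single (Sum.inl a) 1 + Finsupp.single (Sum.inr b) 1 :
        (Fin m ⊕ Fin n) →₀ ℕ) (Sum.inr p)) : ℤ) = if b = p then 1 else 0 := by
    intro p
    simp [Finsupp.single_apply]
  have hvx : ∑ i : Fin m, v (Sum.inl i) = 1 := by
    have hc0 : ((∑ i : Fin m, v (Sum.inl i) : ℕ) : ℤ) = 1 := by
      push_cast
      rw [Finset.sum_congr rfl (fun i _ => hv (Sum.inl i))]
      rw [Finset.sum_add_distrib, hdx, add_zero]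
      rw [Finset.sum_congr rfl (fun i _ => hux i)]
      simp
    exact_mod_cast hc0
  have hvy : ∑ p : Fin n, v (Sum.inr p) = 1 := by
    have hc0 : ((∑ p : Fin n, v (Sum.inr p) : ℕ) : ℤ) = 1 := by
      push_cast
      rw [Finset.sum_congr rfl (fun p _ => hv (Sum.inr p))]
      rw [Finset.sum_add_distrib, hdy, add_zero]
      rw [Finset.sum_congr rfl (fun p _ => huy p)]
      simp
    exact_mod_cast hc0
  obtain ⟨a', ha1, ha0⟩ := aux_sum_one _ hvx
  obtain ⟨b', hb1, hb0⟩ := aux_sum_one _ hvy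
  have hvX : ∀ i : Fin m, (v (Sum.inl i) : ℤ) = if a' = i then 1 else 0 := by
    intro i
    by_cases h : a' = i
    · subst h; simp [ha1]
    · simp [h, ha0 i (fun e => h e.symm)]
  have hvY : ∀ p : Fin n, (v (Sum.inr p) : ℤ) = if b' = p then 1 else 0 := by
    intro p
    by_cases h : b' = p
    · subst h; simp [hb1]
    · simp [h, hb0 p (fun e => h e.symm)]
  have hdX : ∀ i : Fin m,
      d (Sum.inl i) = (if a' = i then (1:ℤ) else 0) - (if a = i then 1 else 0) := by
    intro i
    have h1 := hv (Sum.inl i)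
    rw [hvX i, hux i] at h1
    omega
  have hdY : ∀ p : Fin n,
      d (Sum.inr p) = (if b' = p then (1:ℤ) else 0) - (if b = p then 1 else 0) := by
    intro p
    have h1 := hv (Sum.inr p)
    rw [hvY p, huy p] at h1
    omega
  by_cases hax : a' = a <;> by_cases hby : b' = b
  · -- d = 0 : contradiction
    exfalso
    subst hax; subst hby
    have hvu : v = Finsupp.single (Sum.inl a') 1 + Finsupp.single (Sum.inr b') 1 := by
      ext t
      rcases t with i | p
      · have h1 := hvX i
        have h2 := hux i
        exact_mod_cast h1.trans h2.symm
      · have h1 := hvY p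
        have h2 := huy p
        exact_mod_cast h1.trans h2.symm
    have hz : Ideal.Quotient.mk (jA k m n {v | ∃ w ∈ A, v ≤ w}) (monomial v (1:k)) = 0 := by
      rw [Ideal.Quotient.eq_zero_iff_mem, hvu]; exact hmem
    rw [heq, hz, smul_zero] at hφ
    exact hφ rfl
  · -- a' = a, b' ≠ b : y-linear
    subst hax
    right; left
    refine ⟨b', b, hby, ?_⟩
    ext t
    rcases t with i | p
    · simp [Finsupp.single_apply, hdX i]
    · simp [Finsupp.single_apply, hdY p]
  · -- a' ≠ a, b' = b : x-linear
    subst hby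
    left
    refine ⟨a, a', fun e => hax e.symm, ?_⟩
    ext t
    rcases t with i | p
    · simp [Finsupp.single_apply, hdX i]
    · simp [Finsupp.single_apply, hdY p]
  · -- quadratic
    right; right
    refine ⟨a, a', b', b, fun e => hax e.symm, hby, ?_⟩
    ext t
    rcases t with i | p
    · simp [Finsupp.single_apply, hdX i]
    · simp [Finsupp.single_apply, hdY p]
end

section
/- A k-linear map φ : [J_A]_{(1,1)} → [S/J_A]_{(1,1)} extends to an S-module homomorphism J_A → S/J_A if and only if x_j φ(x_i y_k) = x_i φ(x_j y_k) whenever (i,k),(j,k) ∈ O(A) and y_h φ(x_i y_k) = y_k φ(x_i y_h) whenever (i,h),(i,k) ∈ O(A). (This uses that J_A is generated in degree (1,1) and has Castelnuovo–Mumford regularity at most 2, so its first syzygies are the Koszul-type relations among adjacent edges.) -/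
open MvPolynomial

/-- The degree-`(1,1)` part of `J_A`: the `k`-span of its monomial generators. -/
noncomputable def vSpan (k : Type*) [Field k] (m n : ℕ) (O : Set (Fin m × Fin n)) :
    Submodule k (MvPolynomial (Fin m ⊕ Fin n) k) :=
  Submodule.span k {p | ∃ v ∈ O, p = X (Sum.inl v.1) * X (Sum.inr v.2)}

/-! An `S`-linear map on a monomial ideal is pinned down on the monomials it contains: values
`ψ_v` on generators `x^{d_v}` extend (by `x^μ ↦ x^{μ - d_v} ψ_v` for any generator dividing `x^μ`)
exactly when that recipe does not depend on the chosen generator. For the generators `x_i y_c` of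
`J_A`, two generators `x_i y_c` and `x_j y_{c'}` dividing `x^μ` are joined through `x_j y_c` or
`x_i y_{c'}`, whichever lies below the other and hence in the down-set `O(A)`; each of the two
steps is one of the Koszul-type relations among adjacent edges. -/

theorem LinearMap.smul_apply_eq_of_mul_eq {S M : Type*} [CommSemiring S] [AddCommMonoid M]
    [Module S M] {I : Ideal S} (Φ : I →ₗ[S] M) {a b : I} {r s : S} (h : r * a = s * b) :
    r • Φ a = s • Φ b := by
  rw [← map_smul, ← map_smul]
  exact congrArg Φ (Subtype.ext h)

namespace MvPolynomial

section MonomialIdeal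

variable {σ R M : Type*} [CommSemiring R] [AddCommMonoid M] [Module (MvPolynomial σ R) M]

theorem monomial_sub_smul_eq_of_X_smul_eq {s t μ : σ →₀ ℕ} {a b : σ} {p q : M} (hab : a ≠ b)
    (hst : s + Finsupp.single b 1 = t + Finsupp.single a 1)
    (h : (X b : MvPolynomial σ R) • p = (X a : MvPolynomial σ R) • q) (hs : s ≤ μ) (ht : t ≤ μ) :
    monomial (μ - s) (1 : R) • p = monomial (μ - t) (1 : R) • q := by
  -- `x^L = lcm(x^s, x^t)` divides `x^μ`, and both sides are `x^(μ - L)` times the two sides of `h`.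
  set L := s + Finsupp.single b 1
  have hLμ : L ≤ μ := by
    intro x
    rcases eq_or_ne x b with rfl | hxb
    · have := DFunLike.congr_fun hst x
      simp only [Finsupp.add_apply, Finsupp.single_eq_of_ne hab.symm, add_zero] at this
      rw [show L x = t x from this]
      exact ht x
    · simpa [L, Finsupp.single_eq_of_ne hxb] using hs x
  have hsub : ∀ {u : σ →₀ ℕ} {c : σ}, L = u + Finsupp.single c 1 →
      μ - u = (μ - L) + Finsupp.single c 1 := by
    intro u c hL
    rw [← tsub_add_tsub_cancel hLμ (hL ▸ le_self_add), hL, add_tsub_cancel_left]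
  rw [hsub rfl, hsub hst, monomial_add_single, monomial_add_single, pow_one, pow_one, mul_smul,
    mul_smul, h]

variable (R) in
def MonomialCompatible {ι : Type*} (d : ι → σ →₀ ℕ) (ψ : ι → M) : Prop :=
  ∀ i j μ, d i ≤ μ → d j ≤ μ → monomial (μ - d i) (1 : R) • ψ i = monomial (μ - d j) (1 : R) • ψ j

theorem mem_ideal_span_range_monomial_iff {ι : Type*} {d : ι → σ →₀ ℕ} {f : MvPolynomial σ R} :
    f ∈ Ideal.span (Set.range fun i => monomial (d i) (1 : R)) ↔
      ∀ μ ∈ f.support, ∃ i, d i ≤ μ := by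
  rw [← Function.comp_def (fun s => monomial s (1 : R)) d, Set.range_comp,
    mem_ideal_span_monomial_image]
  simp only [Set.exists_range_iff]

variable [Module R M] [IsScalarTower R (MvPolynomial σ R) M] {ι : Type*}

open Classical in
noncomputable def monomialExtension (d : ι → σ →₀ ℕ) (ψ : ι → M) :
    MvPolynomial σ R →ₗ[R] M :=
  (basisMonomials σ R).constr R fun μ =>
    if h : ∃ i, d i ≤ μ then monomial (μ - d h.choose) (1 : R) • ψ h.choose else 0

variable {d : ι → σ →₀ ℕ} {ψ : ι → M}

theorem monomialExtension_monomial (hψ : MonomialCompatible R d ψ) {i : ι} {μ : σ →₀ ℕ}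
    (hi : d i ≤ μ) (c : R) :
    monomialExtension d ψ (monomial μ c) = monomial (μ - d i) c • ψ i := by
  have hex : ∃ j, d j ≤ μ := ⟨i, hi⟩
  have hsmul : ∀ ν, (monomial ν c : MvPolynomial σ R) = c • monomial ν 1 := fun ν => by
    rw [smul_monomial, smul_eq_mul, mul_one]
  have hbasis : basisMonomials σ R μ = monomial μ 1 := by rw [coe_basisMonomials]
  rw [hsmul, map_smul, hsmul, smul_assoc, ← hbasis, monomialExtension,
    Module.Basis.constr_basis, dif_pos hex, hψ _ _ _ hex.choose_spec hi]

theorem monomialExtension_mul (hψ : MonomialCompatible R d ψ) (p : MvPolynomial σ R)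
    {f : MvPolynomial σ R} (hf : ∀ μ ∈ f.support, ∃ i, d i ≤ μ) :
    monomialExtension d ψ (p * f) = p • monomialExtension d ψ f := by
  induction p using MvPolynomial.induction_on' with
  | monomial ν c =>
    rw [f.as_sum, Finset.mul_sum, map_sum, map_sum, Finset.smul_sum]
    refine Finset.sum_congr rfl fun μ hμ => ?_
    obtain ⟨i, hi⟩ := hf μ hμ
    rw [monomial_mul, monomialExtension_monomial hψ (hi.trans le_add_self),
      monomialExtension_monomial hψ hi, ← mul_smul, monomial_mul, add_tsub_assoc_of_le hi]
  | add p q hp hq => rw [add_mul, map_add, hp, hq, add_smul]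

theorem exists_linearMap_span_monomial_of_compatible (hψ : MonomialCompatible R d ψ) :
    ∃ Φ : Ideal.span (Set.range fun i => monomial (d i) (1 : R)) →ₗ[MvPolynomial σ R] M,
      ∀ i, Φ ⟨monomial (d i) 1, Ideal.subset_span ⟨i, rfl⟩⟩ = ψ i := by
  refine ⟨{ toFun := fun f => monomialExtension d ψ (f : MvPolynomial σ R)
            map_add' := fun f g => map_add _ _ _
            map_smul' := fun p f =>
              monomialExtension_mul hψ p (mem_ideal_span_range_monomial_iff.mp f.2) },
    fun i => ?_⟩
  simp only [LinearMap.coe_mk, AddHom.coe_mk]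
  rw [monomialExtension_monomial hψ le_rfl, tsub_self, monomial_zero', C_1, one_smul]

end MonomialIdeal

section EdgeIdeal

variable {R M α β : Type*} [CommSemiring R] [AddCommMonoid M] [Module (MvPolynomial (α ⊕ β) R) M]

noncomputable def edgeExponent (v : α × β) : α ⊕ β →₀ ℕ :=
  Finsupp.single (Sum.inl v.1) 1 + Finsupp.single (Sum.inr v.2) 1

theorem X_inl_mul_X_inr (v : α × β) :
    (X (Sum.inl v.1) * X (Sum.inr v.2) : MvPolynomial (α ⊕ β) R) = monomial (edgeExponent v) 1 := by
  rw [X, X, monomial_mul, one_mul, edgeExponent]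

theorem edgeExponent_le_iff {v : α × β} {μ : α ⊕ β →₀ ℕ} :
    edgeExponent v ≤ μ ↔ 1 ≤ μ (Sum.inl v.1) ∧ 1 ≤ μ (Sum.inr v.2) := by
  refine ⟨fun h => ⟨by simpa [edgeExponent] using h (Sum.inl v.1),
    by simpa [edgeExponent] using h (Sum.inr v.2)⟩, ?_⟩
  rintro ⟨h1, h2⟩ (a | b)
  · rcases eq_or_ne a v.1 with rfl | ha
    · simpa [edgeExponent] using h1
    · simp [edgeExponent, ha.symm]
  · rcases eq_or_ne b v.2 with rfl | hb
    · simpa [edgeExponent] using h2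
    · simp [edgeExponent, hb.symm]

variable {O : Set (α × β)} {ψ : O → M}

theorem monomial_sub_smul_eq_of_X_inl_smul_eq
    (hx : ∀ (i j : α) (c : β) (hic : (i, c) ∈ O) (hjc : (j, c) ∈ O),
      (X (Sum.inl j) : MvPolynomial (α ⊕ β) R) • ψ ⟨(i, c), hic⟩ =
        (X (Sum.inl i) : MvPolynomial (α ⊕ β) R) • ψ ⟨(j, c), hjc⟩)
    {i j : α} {c : β} (hic : (i, c) ∈ O) (hjc : (j, c) ∈ O) {μ : α ⊕ β →₀ ℕ}
    (hiμ : edgeExponent (i, c) ≤ μ) (hjμ : edgeExponent (j, c) ≤ μ) :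
    monomial (μ - edgeExponent (i, c)) (1 : R) • ψ ⟨(i, c), hic⟩ =
      monomial (μ - edgeExponent (j, c)) (1 : R) • ψ ⟨(j, c), hjc⟩ := by
  rcases eq_or_ne i j with rfl | hij
  · rfl
  · refine monomial_sub_smul_eq_of_X_smul_eq (Sum.inl_injective.ne hij) ?_ (hx i j c hic hjc)
      hiμ hjμ
    simp only [edgeExponent]
    abel

theorem monomial_sub_smul_eq_of_X_inr_smul_eq
    (hy : ∀ (i : α) (c c' : β) (hic : (i, c) ∈ O) (hic' : (i, c') ∈ O),
      (X (Sum.inr c) : MvPolynomial (α ⊕ β) R) • ψ ⟨(i, c'), hic'⟩ =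
        (X (Sum.inr c') : MvPolynomial (α ⊕ β) R) • ψ ⟨(i, c), hic⟩)
    {i : α} {c c' : β} (hic : (i, c) ∈ O) (hic' : (i, c') ∈ O) {μ : α ⊕ β →₀ ℕ}
    (hcμ : edgeExponent (i, c) ≤ μ) (hc'μ : edgeExponent (i, c') ≤ μ) :
    monomial (μ - edgeExponent (i, c)) (1 : R) • ψ ⟨(i, c), hic⟩ =
      monomial (μ - edgeExponent (i, c')) (1 : R) • ψ ⟨(i, c'), hic'⟩ := by
  rcases eq_or_ne c c' with rfl | hcc'
  · rfl
  · refine monomial_sub_smul_eq_of_X_smul_eq (Sum.inr_injective.ne hcc') ?_ (hy i c' c hic' hic)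
      hcμ hc'μ
    simp only [edgeExponent]
    abel

theorem monomialCompatible_edgeExponent [LinearOrder α] [LinearOrder β] (hO : IsLowerSet O)
    (hx : ∀ (i j : α) (c : β) (hic : (i, c) ∈ O) (hjc : (j, c) ∈ O),
      (X (Sum.inl j) : MvPolynomial (α ⊕ β) R) • ψ ⟨(i, c), hic⟩ =
        (X (Sum.inl i) : MvPolynomial (α ⊕ β) R) • ψ ⟨(j, c), hjc⟩)
    (hy : ∀ (i : α) (c c' : β) (hic : (i, c) ∈ O) (hic' : (i, c') ∈ O),
      (X (Sum.inr c) : MvPolynomial (α ⊕ β) R) • ψ ⟨(i, c'), hic'⟩ =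
        (X (Sum.inr c') : MvPolynomial (α ⊕ β) R) • ψ ⟨(i, c), hic⟩) :
    MonomialCompatible R (fun v : O => edgeExponent v.1) ψ := by
  rintro ⟨⟨i, c⟩, hic⟩ ⟨⟨j, c'⟩, hjc'⟩ μ (hiμ : edgeExponent (i, c) ≤ μ)
    (hjμ : edgeExponent (j, c') ≤ μ)
  have hi := edgeExponent_le_iff.mp hiμ
  have hj := edgeExponent_le_iff.mp hjμ
  rcases le_total c c' with hcc' | hc'c
  · have hjc : (j, c) ∈ O := hO (show (j, c) ≤ (j, c') from ⟨le_rfl, hcc'⟩) hjc'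
    have hjcμ : edgeExponent (j, c) ≤ μ := edgeExponent_le_iff.mpr ⟨hj.1, hi.2⟩
    exact (monomial_sub_smul_eq_of_X_inl_smul_eq hx hic hjc hiμ hjcμ).trans
      (monomial_sub_smul_eq_of_X_inr_smul_eq hy hjc hjc' hjcμ hjμ)
  · have hic' : (i, c') ∈ O := hO (show (i, c') ≤ (i, c) from ⟨le_rfl, hc'c⟩) hic
    have hic'μ : edgeExponent (i, c') ≤ μ := edgeExponent_le_iff.mpr ⟨hi.1, hj.2⟩
    exact (monomial_sub_smul_eq_of_X_inr_smul_eq hy hic hic' hiμ hic'μ).trans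
      (monomial_sub_smul_eq_of_X_inl_smul_eq hx hic' hjc' hic'μ hjμ)

end EdgeIdeal

end MvPolynomial

theorem jA_eq_span_range_monomial (k : Type*) [Field k] (m n : ℕ) (O : Set (Fin m × Fin n)) :
    jA k m n O = Ideal.span (Set.range fun v : O => monomial (edgeExponent v.1) (1 : k)) := by
  rw [jA]
  congr 1
  ext p
  constructor
  · rintro ⟨v, hv, rfl⟩
    exact ⟨⟨v, hv⟩, (X_inl_mul_X_inr v).symm⟩
  · rintro ⟨v, rfl⟩
    exact ⟨v.1, v.2, (X_inl_mul_X_inr v.1).symm⟩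

theorem stmt13_general {k : Type*} [Field k] {m n : ℕ}
    (A : Set (Fin m × Fin n))
    (O : Set (Fin m × Fin n)) (hO : O = {v | ∃ w ∈ A, v ≤ w})
    (φ : ↥(vSpan k m n O) →ₗ[k] (MvPolynomial (Fin m ⊕ Fin n) k ⧸ jA k m n O)) :
    (∃ Φ : ↥(jA k m n O) →ₗ[MvPolynomial (Fin m ⊕ Fin n) k]
        (MvPolynomial (Fin m ⊕ Fin n) k ⧸ jA k m n O),
      ∀ (v : Fin m × Fin n) (hv : v ∈ O),
        Φ ⟨X (Sum.inl v.1) * X (Sum.inr v.2), Ideal.subset_span ⟨v, hv, rfl⟩⟩ =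
        φ ⟨X (Sum.inl v.1) * X (Sum.inr v.2), Submodule.subset_span ⟨v, hv, rfl⟩⟩) ↔
    ((∀ (i j : Fin m) (kk : Fin n) (hik : (i, kk) ∈ O) (hjk : (j, kk) ∈ O),
        (X (Sum.inl j) : MvPolynomial (Fin m ⊕ Fin n) k) •
          φ ⟨X (Sum.inl i) * X (Sum.inr kk), Submodule.subset_span ⟨(i, kk), hik, rfl⟩⟩ =
        (X (Sum.inl i) : MvPolynomial (Fin m ⊕ Fin n) k) •
          φ ⟨X (Sum.inl j) * X (Sum.inr kk), Submodule.subset_span ⟨(j, kk), hjk, rfl⟩⟩) ∧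
     (∀ (i : Fin m) (hh kk : Fin n) (hih : (i, hh) ∈ O) (hik : (i, kk) ∈ O),
        (X (Sum.inr hh) : MvPolynomial (Fin m ⊕ Fin n) k) •
          φ ⟨X (Sum.inl i) * X (Sum.inr kk), Submodule.subset_span ⟨(i, kk), hik, rfl⟩⟩ =
        (X (Sum.inr kk) : MvPolynomial (Fin m ⊕ Fin n) k) •
          φ ⟨X (Sum.inl i) * X (Sum.inr hh), Submodule.subset_span ⟨(i, hh), hih, rfl⟩⟩)) := by
  constructor
  · rintro ⟨Φ, hΦ⟩
    refine ⟨fun i j c hic hjc => ?_, fun i c c' hic hic' => ?_⟩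
    · rw [← hΦ (i, c) hic, ← hΦ (j, c) hjc]
      exact Φ.smul_apply_eq_of_mul_eq (mul_left_comm _ _ _)
    · rw [← hΦ (i, c') hic', ← hΦ (i, c) hic]
      exact Φ.smul_apply_eq_of_mul_eq (by dsimp only; ring)
  · rintro ⟨hx, hy⟩
    have hlower : IsLowerSet O := hO ▸ (lowerClosure A).lower
    obtain ⟨Φ, hΦ⟩ := exists_linearMap_span_monomial_of_compatible
      (monomialCompatible_edgeExponent (ψ := fun v : O =>
        φ ⟨_, Submodule.subset_span ⟨v.1, v.2, rfl⟩⟩) hlower hx hy)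
    refine ⟨Φ ∘ₗ (LinearEquiv.ofEq _ _ (jA_eq_span_range_monomial k m n O)).toLinearMap,
      fun v hv => ?_⟩
    rw [← hΦ ⟨v, hv⟩]
    exact congrArg Φ (Subtype.ext (X_inl_mul_X_inr v))

/-- A `k`-linear map `φ : [J_A]_{(1,1)} → S/J_A` extends to an `S`-module homomorphism
`J_A → S/J_A` if and only if `x_j φ(x_i y_k) = x_i φ(x_j y_k)` whenever
`(i,k), (j,k) ∈ O(A)`, and `y_h φ(x_i y_k) = y_k φ(x_i y_h)` whenever
`(i,h), (i,k) ∈ O(A)`. -/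
theorem stmt13 {k : Type*} [Field k] {m n : ℕ}
    (A : Set (Fin m × Fin n)) (hA : IsAntichain (· ≤ ·) A)
    (O : Set (Fin m × Fin n)) (hO : O = {v | ∃ w ∈ A, v ≤ w})
    (φ : ↥(vSpan k m n O) →ₗ[k] (MvPolynomial (Fin m ⊕ Fin n) k ⧸ jA k m n O)) :
    (∃ Φ : ↥(jA k m n O) →ₗ[MvPolynomial (Fin m ⊕ Fin n) k]
        (MvPolynomial (Fin m ⊕ Fin n) k ⧸ jA k m n O),
      ∀ (v : Fin m × Fin n) (hv : v ∈ O),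
        Φ ⟨X (Sum.inl v.1) * X (Sum.inr v.2), Ideal.subset_span ⟨v, hv, rfl⟩⟩ =
        φ ⟨X (Sum.inl v.1) * X (Sum.inr v.2), Submodule.subset_span ⟨v, hv, rfl⟩⟩) ↔
    ((∀ (i j : Fin m) (kk : Fin n) (hik : (i, kk) ∈ O) (hjk : (j, kk) ∈ O),
        (X (Sum.inl j) : MvPolynomial (Fin m ⊕ Fin n) k) •
          φ ⟨X (Sum.inl i) * X (Sum.inr kk), Submodule.subset_span ⟨(i, kk), hik, rfl⟩⟩ =
        (X (Sum.inl i) : MvPolynomial (Fin m ⊕ Fin n) k) •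
          φ ⟨X (Sum.inl j) * X (Sum.inr kk), Submodule.subset_span ⟨(j, kk), hjk, rfl⟩⟩) ∧
     (∀ (i : Fin m) (hh kk : Fin n) (hih : (i, hh) ∈ O) (hik : (i, kk) ∈ O),
        (X (Sum.inr hh) : MvPolynomial (Fin m ⊕ Fin n) k) •
          φ ⟨X (Sum.inl i) * X (Sum.inr kk), Submodule.subset_span ⟨(i, kk), hik, rfl⟩⟩ =
        (X (Sum.inr kk) : MvPolynomial (Fin m ⊕ Fin n) k) •
          φ ⟨X (Sum.inl i) * X (Sum.inr hh), Submodule.subset_span ⟨(i, hh), hih, rfl⟩⟩)) :=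
  stmt13_general A O hO φ
end
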